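/- For the Gandy-style forcing 𝒫: for every condition p ∈ 𝒫 there exists a generic sequence ⟨G_n⟩_{n∈ℕ} meeting p, where generic means that for every dense subset of 𝒫 that is arithmetical in the complete Π¹₁ set, the sequence meets some condition in it. -/

import Mathlib

namespace SOA

/-! Syntax of second-order arithmetic -/

inductive Term : Type where
  | var : ℕ → Term
  | zero : Term
  | succ : Term → Term
  | add : Term → Term → Term
  | mul : Term → Term → Term

inductive Fml : Type where
  | eq : Term → Term → Fml
  | lt : Term → Term → Fml
  | mem : Term → ℕ → Fml
  | not : Fml → Fml
  | and : Fml → Fml → Fml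
  | nall : ℕ → Fml → Fml
  | nex : ℕ → Fml → Fml
  | ballLt : ℕ → Term → Fml → Fml
  | bexLt : ℕ → Term → Fml → Fml
  | sall : ℕ → Fml → Fml
  | sex : ℕ → Fml → Fml

/-! Henkin (two-sorted) models of the language of second-order arithmetic -/

structure L2Model : Type 1 where
  Num : Type
  zero : Num
  succ : Num → Num
  add : Num → Num → Num
  mul : Num → Num → Num
  Sets : Set (Set Num)

def L2Model.lt (M : L2Model) (a b : M.Num) : Prop := ∃ k, M.add a (M.succ k) = b

def Term.val (M : L2Model) (v : ℕ → M.Num) : Term → M.Num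
  | .var n => v n
  | .zero => M.zero
  | .succ t => M.succ (t.val M v)
  | .add t u => M.add (t.val M v) (u.val M v)
  | .mul t u => M.mul (t.val M v) (u.val M v)

/-- Satisfaction: number variables range over `M.Num`, set variables over `M.Sets`. -/
def Sat (M : L2Model) : (ℕ → M.Num) → (ℕ → Set M.Num) → Fml → Prop
  | v, _, .eq t u => t.val M v = u.val M v
  | v, _, .lt t u => M.lt (t.val M v) (u.val M v)
  | v, A, .mem t i => t.val M v ∈ A i
  | v, A, .not φ => ¬ Sat M v A φ
  | v, A, .and φ ψ => Sat M v A φ ∧ Sat M v A ψ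
  | v, A, .nall x φ => ∀ a : M.Num, Sat M (Function.update v x a) A φ
  | v, A, .nex x φ => ∃ a : M.Num, Sat M (Function.update v x a) A φ
  | v, A, .ballLt x t φ => ∀ a : M.Num, M.lt a (t.val M v) → Sat M (Function.update v x a) A φ
  | v, A, .bexLt x t φ => ∃ a : M.Num, M.lt a (t.val M v) ∧ Sat M (Function.update v x a) A φ
  | v, A, .sall X φ => ∀ S ∈ M.Sets, Sat M v (Function.update A X S) φ
  | v, A, .sex X φ => ∃ S ∈ M.Sets, Sat M v (Function.update A X S) φ

/-! Formula classes -/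

def Fml.arithmetical : Fml → Prop
  | .eq _ _ => True
  | .lt _ _ => True
  | .mem _ _ => True
  | .not φ => φ.arithmetical
  | .and φ ψ => φ.arithmetical ∧ ψ.arithmetical
  | .nall _ φ => φ.arithmetical
  | .nex _ φ => φ.arithmetical
  | .ballLt _ _ φ => φ.arithmetical
  | .bexLt _ _ φ => φ.arithmetical
  | .sall _ _ => False
  | .sex _ _ => False

def Fml.delta0 : Fml → Prop
  | .eq _ _ => True
  | .lt _ _ => True
  | .mem _ _ => True
  | .not φ => φ.delta0
  | .and φ ψ => φ.delta0 ∧ ψ.delta0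
  | .ballLt _ _ φ => φ.delta0
  | .bexLt _ _ φ => φ.delta0
  | .nall _ _ => False
  | .nex _ _ => False
  | .sall _ _ => False
  | .sex _ _ => False

def Fml.sigma01 (φ : Fml) : Prop := φ.delta0 ∨ ∃ x ψ, Fml.delta0 ψ ∧ φ = .nex x ψ
def Fml.sigma11 (φ : Fml) : Prop := φ.arithmetical ∨ ∃ X ψ, Fml.arithmetical ψ ∧ φ = .sex X ψ
def Fml.pi11 (φ : Fml) : Prop := φ.arithmetical ∨ ∃ X ψ, Fml.arithmetical ψ ∧ φ = .sall X ψ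
def Fml.sigma12 (φ : Fml) : Prop := φ.sigma11 ∨ ∃ X ψ, Fml.pi11 ψ ∧ φ = .sex X ψ
def Fml.pi12 (φ : Fml) : Prop := φ.pi11 ∨ ∃ X ψ, Fml.sigma11 ψ ∧ φ = .sall X ψ

/-! ω-models (standard first-order part) -/

def stdModel (𝒮 : Set (Set ℕ)) : L2Model := ⟨ℕ, 0, Nat.succ, (· + ·), (· * ·), 𝒮⟩

/-- Truth of `φ` in the full standard model, with `X` as value of every free set
variable and `0` as value of every free number variable (used for formulas whose only
free set variable is the distinguished one). -/
def holds1 (φ : Fml) (X : Set ℕ) : Prop :=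
  Sat (stdModel Set.univ) (fun _ => (0:ℕ)) (fun _ => X) φ

/-- `X` is hyperarithmetical in `Y`: by Kleene's theorem, `X` is Δ¹₁ in `Y`
(definable both by a Σ¹₁ and by a Π¹₁ formula with parameter `Y`, number variable `0`). -/
def HypIn (X Y : Set ℕ) : Prop :=
  ∃ σ π : Fml, σ.sigma11 ∧ π.pi11 ∧
    (∀ n : ℕ, n ∈ X ↔ Sat (stdModel Set.univ) (fun _ => n) (fun _ => Y) σ) ∧
    (∀ n : ℕ, n ∈ X ↔ Sat (stdModel Set.univ) (fun _ => n) (fun _ => Y) π)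

/-- `X` is hyperarithmetical. -/
def Hyp (X : Set ℕ) : Prop := HypIn X ∅

/-- ω-model: nonempty and closed under arithmetical definability with parameters. -/
def IsOmegaModel (𝒮 : Set (Set ℕ)) : Prop :=
  𝒮.Nonempty ∧
  ∀ φ : Fml, φ.arithmetical → ∀ (v : ℕ → ℕ) (A : ℕ → Set ℕ), (∀ i, A i ∈ 𝒮) →
    ∀ x : ℕ, {n : ℕ | Sat (stdModel Set.univ) (Function.update v x n) A φ} ∈ 𝒮

/-- β-model: an ω-model absolute for Σ¹₁ formulas with parameters from the model. -/
def IsBetaModel (𝒮 : Set (Set ℕ)) : Prop :=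
  IsOmegaModel 𝒮 ∧
  ∀ φ : Fml, φ.sigma11 → ∀ (v : ℕ → ℕ) (A : ℕ → Set ℕ), (∀ i, A i ∈ 𝒮) →
    (Sat (stdModel 𝒮) v A φ ↔ Sat (stdModel Set.univ) v A φ)

/-- `X` is definable over the ω-model `𝒮` without parameters: some formula (all of whose
free set variables are given the value `Z`) is satisfied in `𝒮` exactly by `Z = X`. -/
def DefinableIn (𝒮 : Set (Set ℕ)) (X : Set ℕ) : Prop :=
  ∃ φ : Fml, ∀ Z ∈ 𝒮, (Sat (stdModel 𝒮) (fun _ => (0:ℕ)) (fun _ => Z) φ ↔ Z = X)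

/-- `X` is definable over `𝒮` from the parameter `Y` (set variable 0 is the definiendum). -/
def DefinableInFrom (𝒮 : Set (Set ℕ)) (X Y : Set ℕ) : Prop :=
  ∃ φ : Fml, ∀ Z ∈ 𝒮,
    (Sat (stdModel 𝒮) (fun _ => (0:ℕ)) (fun i => if i = 0 then Z else Y) φ ↔ Z = X)


/-! Gandy-style forcing over the standard model -/

/-- Recursive join `X_0 ⊕ ⋯ ⊕ X_{k-1}` of a finite list of reals. -/
def listJoin (L : List (Set ℕ)) : Set ℕ :=
  {n : ℕ | (Nat.unpair n).1 < L.length ∧ (Nat.unpair n).2 ∈ L.getD (Nat.unpair n).1 ∅}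

/-- `𝒞` is a Σ¹₁ set (class) of reals. -/
def Sigma11Class (𝒞 : Set (Set ℕ)) : Prop :=
  ∃ φ : Fml, φ.sigma11 ∧ ∀ X : Set ℕ, X ∈ 𝒞 ↔ holds1 φ X

/-- `S` is an enumeration of the Σ¹₁ sets of reals. -/
def IsS11Enum (S : ℕ → Set (Set ℕ)) : Prop :=
  (∀ e, Sigma11Class (S e)) ∧ ∀ 𝒞, Sigma11Class 𝒞 → ∃ e, S e = 𝒞

/-- Forcing conditions: finite subsets of ℕ × ℕ^{<ω}. -/
abbrev Cond := Finset (ℕ × List ℕ)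

/-- `⟨X_n⟩` meets `p` iff `X_{n₁} ⊕ ⋯ ⊕ X_{n_k} ∈ S_e` for every `(e,⟨n₁,…,n_k⟩) ∈ p`. -/
def Meets (S : ℕ → Set (Set ℕ)) (Xs : ℕ → Set ℕ) (p : Cond) : Prop :=
  ∀ q ∈ p, listJoin (q.2.map Xs) ∈ S q.1

/-- The poset 𝒫 of meetable conditions. -/
def Conds (S : ℕ → Set (Set ℕ)) : Set Cond := {p | ∃ Xs : ℕ → Set ℕ, Meets S Xs p}

/-- Action of a permutation of ℕ on conditions. -/
def permCond (π : Equiv.Perm ℕ) (p : Cond) : Cond := p.image fun q => (q.1, q.2.map π)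

/-- Support of a condition. -/
def supp (p : Cond) : Finset ℕ := p.biUnion fun q => q.2.toFinset

/-- The ω-model HYP(Y) of all reals hyperarithmetical in `Y`. -/
def HYPin (Y : Set ℕ) : Set (Set ℕ) := {X | HypIn X Y}

/-- The set of numerical codes of the members of a set of conditions. -/
def codeSet (D : Set Cond) : Set ℕ := {n | ∃ p ∈ D, Encodable.encode p = n}

/-- `D ⊆ ℕ` is definable over the ω-model `𝒮` from the parameter `Y`. -/
def DefOverFrom (𝒮 : Set (Set ℕ)) (Y : Set ℕ) (D : Set ℕ) : Prop :=
  ∃ φ : Fml, ∀ n : ℕ, n ∈ D ↔ Sat (stdModel 𝒮) (fun _ => n) (fun _ => Y) φ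

/-- `D` is a dense subset of the poset `P` (order = reverse inclusion). -/
def DenseIn (P D : Set Cond) : Prop := D ⊆ P ∧ ∀ p ∈ P, ∃ q ∈ D, p ⊆ q

/-- `⟨G_n⟩` is generic: it meets every dense subset of 𝒫 definable over HYP. -/
def Generic (S : ℕ → Set (Set ℕ)) (G : ℕ → Set ℕ) : Prop :=
  ∀ D : Set Cond, DenseIn (Conds S) D → DefOverFrom (HYPin ∅) ∅ (codeSet D) →
    ∃ p ∈ D, Meets S G p

/-- The relativized poset 𝒫^Y. -/
def CondsOver (S : ℕ → Set (Set ℕ)) (Y : Set ℕ) : Set Cond :=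
  {p | ∃ Xs : ℕ → Set ℕ, Xs 0 = Y ∧ Meets S Xs p}

/-- `⟨G_n⟩` is generic over `Y`: it meets every dense subset of 𝒫^Y definable
from `Y` over HYP(Y). -/
def GenericOver (S : ℕ → Set (Set ℕ)) (Y : Set ℕ) (G : ℕ → Set ℕ) : Prop :=
  ∀ D : Set Cond, DenseIn (CondsOver S Y) D → DefOverFrom (HYPin Y) Y (codeSet D) →
    ∃ p ∈ D, Meets S G p


/-! Axioms of subsystems of second-order arithmetic, rendered semantically
    on Henkin models (so, by completeness, `Provable` below is provability). -/

/-- Basic axioms of ordered semiring arithmetic. -/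
def L2Model.base (M : L2Model) : Prop :=
  (∀ a, M.succ a ≠ M.zero) ∧ (∀ a b, M.succ a = M.succ b → a = b) ∧
  (∀ a, M.add a M.zero = a) ∧ (∀ a b, M.add a (M.succ b) = M.succ (M.add a b)) ∧
  (∀ a, M.mul a M.zero = M.zero) ∧ (∀ a b, M.mul a (M.succ b) = M.add (M.mul a b) a) ∧
  (∀ a b, M.add a b = M.add b a) ∧ (∀ a b c, M.add (M.add a b) c = M.add a (M.add b c)) ∧
  (∀ a b, M.mul a b = M.mul b a) ∧ (∀ a b c, M.mul (M.mul a b) c = M.mul a (M.mul b c)) ∧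
  (∀ a b c, M.mul a (M.add b c) = M.add (M.mul a b) (M.mul a c)) ∧
  (∀ a b c, M.add a b = M.add a c → b = c) ∧
  (∀ a b, M.lt a b ∨ a = b ∨ M.lt b a) ∧ (∀ a, ¬ M.lt a a)

/-- Induction axiom for sets of the model. -/
def L2Model.indAx (M : L2Model) : Prop :=
  ∀ X ∈ M.Sets, M.zero ∈ X → (∀ a, a ∈ X → M.succ a ∈ X) → ∀ a, a ∈ X

/-- Arithmetical comprehension (with number and set parameters). -/
def ACAax (M : L2Model) : Prop :=
  ∀ φ : Fml, φ.arithmetical → ∀ (v : ℕ → M.Num) (A : ℕ → Set M.Num),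
    (∀ i, A i ∈ M.Sets) → ∀ x : ℕ,
      {a : M.Num | Sat M (Function.update v x a) A φ} ∈ M.Sets

/-- Δ⁰₁ comprehension. -/
def Delta01CAax (M : L2Model) : Prop :=
  ∀ σ π : Fml, σ.sigma01 → π.sigma01 → ∀ (v : ℕ → M.Num) (A : ℕ → Set M.Num),
    (∀ i, A i ∈ M.Sets) → ∀ x : ℕ,
    (∀ a : M.Num, Sat M (Function.update v x a) A σ ↔ ¬ Sat M (Function.update v x a) A π) →
    {a : M.Num | Sat M (Function.update v x a) A σ} ∈ M.Sets

/-- Σ⁰₁ induction. -/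
def Sigma01IndAx (M : L2Model) : Prop :=
  ∀ σ : Fml, σ.sigma01 → ∀ (v : ℕ → M.Num) (A : ℕ → Set M.Num),
    (∀ i, A i ∈ M.Sets) → ∀ x : ℕ,
    Sat M (Function.update v x M.zero) A σ →
    (∀ a, Sat M (Function.update v x a) A σ → Sat M (Function.update v x (M.succ a)) A σ) →
    ∀ a, Sat M (Function.update v x a) A σ

/-- `c` is the Cantor pair code `⟨a,b⟩`, i.e. `2c = (a+b)(a+b+1) + 2a`. -/
def pairRel (M : L2Model) (a b c : M.Num) : Prop :=
  M.add c c = M.add (M.mul (M.add a b) (M.succ (M.add a b))) (M.add a a)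

/-- The pair `⟨a,b⟩` belongs to `X`. -/
def inPair (M : L2Model) (a b : M.Num) (X : Set M.Num) : Prop :=
  ∃ c, pairRel M a b c ∧ c ∈ X

/-- Field of a binary relation coded as a set of pairs. -/
def fieldOf (M : L2Model) (W : Set M.Num) : Set M.Num :=
  {a | ∃ b, inPair M a b W ∨ inPair M b a W}

/-- `W` codes a (reflexive) linear ordering of its field. -/
def LinOrd (M : L2Model) (W : Set M.Num) : Prop :=
  (∀ c ∈ W, ∃ a b, pairRel M a b c) ∧
  (∀ a ∈ fieldOf M W, inPair M a a W) ∧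
  (∀ a b, inPair M a b W → inPair M b a W → a = b) ∧
  (∀ a b c, inPair M a b W → inPair M b c W → inPair M a c W) ∧
  (∀ a b, a ∈ fieldOf M W → b ∈ fieldOf M W → inPair M a b W ∨ inPair M b a W)

/-- `W` codes a well ordering (in the sense of the model): every nonempty set
in the model meeting the field has a `W`-least member. -/
def WOrd (M : L2Model) (W : Set M.Num) : Prop :=
  LinOrd M W ∧
  ∀ Z ∈ M.Sets, (∃ a, a ∈ Z ∧ a ∈ fieldOf M W) →
    ∃ a, a ∈ Z ∧ a ∈ fieldOf M W ∧ ∀ b, b ∈ Z → b ∈ fieldOf M W → inPair M a b W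

/-- Arithmetical transfinite recursion: for every arithmetical `θ` (with distinguished
number variable `x` and set variable `Xv`, and arbitrary parameters) and every well
ordering `W` in the model, the iteration hierarchy `Y` exists in the model. -/
def ATRax (M : L2Model) : Prop :=
  ∀ θ : Fml, θ.arithmetical → ∀ (x Xv : ℕ) (v : ℕ → M.Num) (A : ℕ → Set M.Num),
    (∀ i, A i ∈ M.Sets) → ∀ W ∈ M.Sets, WOrd M W →
    ∃ Y ∈ M.Sets, ∀ n j : M.Num,
      inPair M n j Y ↔ (j ∈ fieldOf M W ∧
        Sat M (Function.update v x n)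
          (Function.update A Xv
            {c | c ∈ Y ∧ ∃ m i, pairRel M m i c ∧ inPair M i j W ∧ i ≠ j}) θ)

/-- Transfinite induction scheme, for arbitrary L₂ formulas. -/
def TIax (M : L2Model) : Prop :=
  ∀ φ : Fml, ∀ (x : ℕ) (v : ℕ → M.Num) (A : ℕ → Set M.Num),
    (∀ i, A i ∈ M.Sets) → ∀ W ∈ M.Sets, WOrd M W →
    (∀ j ∈ fieldOf M W,
        (∀ i, inPair M i j W → i ≠ j → Sat M (Function.update v x i) A φ) →
        Sat M (Function.update v x j) A φ) →
    ∀ j ∈ fieldOf M W, Sat M (Function.update v x j) A φ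

/-- Henkin model of ATR₀. -/
def ModelOfATR (M : L2Model) : Prop := M.base ∧ M.indAx ∧ ACAax M ∧ ATRax M

/-- Henkin model of Π¹_∞-TI₀. -/
def ModelOfTI (M : L2Model) : Prop := M.base ∧ M.indAx ∧ ACAax M ∧ TIax M

/-- `X` is definable from `Y` over the Henkin model `M` (set variable 0 is the
definiendum, all other set variables denote `Y`). -/
def DefFromInModel (M : L2Model) (X Y : Set M.Num) : Prop :=
  ∃ φ : Fml, ∀ Z ∈ M.Sets,
    (Sat M (fun _ => M.zero) (fun i => if i = 0 then Z else Y) φ ↔ Z = X)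

/-- `X ≤_HYP Y` in the sense of the Henkin model `M`: `X` is Δ¹₁ in `Y` over `M`. -/
def HypInSem (M : L2Model) (X Y : Set M.Num) : Prop :=
  ∃ σ π : Fml, σ.sigma11 ∧ π.pi11 ∧
    (∀ n : M.Num, n ∈ X ↔ Sat M (fun _ => n) (fun _ => Y) σ) ∧
    (∀ n : M.Num, n ∈ X ↔ Sat M (fun _ => n) (fun _ => Y) π)

/-- The scheme (*): whatever is definable from `Y` is hyperarithmetical in `Y`. -/
def StarAx (M : L2Model) : Prop :=
  ∀ X ∈ M.Sets, ∀ Y ∈ M.Sets, DefFromInModel M X Y → HypInSem M X Y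

/-- `X ≤_T Y` in the sense of the model: `X` and its complement are both
Σ⁰₁ in `Y` over `M` (Post's characterization of relative recursiveness). -/
def TuringInSem (M : L2Model) (X Y : Set M.Num) : Prop :=
  ∃ σ τ : Fml, σ.sigma01 ∧ τ.sigma01 ∧
    (∀ n : M.Num, n ∈ X ↔ Sat M (fun _ => n) (fun _ => Y) σ) ∧
    (∀ n : M.Num, n ∉ X ↔ Sat M (fun _ => n) (fun _ => Y) τ)

/-- The scheme (**): whatever is definable from `Y` is recursive in `Y`. -/
def StarStarAx (M : L2Model) : Prop :=
  ∀ X ∈ M.Sets, ∀ Y ∈ M.Sets, DefFromInModel M X Y → TuringInSem M X Y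

/-! Internal coding of finite (binary) sequences via Gödel's β-function. -/

/-- `r = c mod (1 + (i+1)d)` — Gödel's β-function. -/
def betaRel (M : L2Model) (c d i r : M.Num) : Prop :=
  ∃ q, c = M.add (M.mul q (M.succ (M.mul (M.succ i) d))) r ∧
    M.lt r (M.succ (M.mul (M.succ i) d))

/-- `s = ⟨l, ⟨c,d⟩⟩` codes a sequence of length `l`. -/
def seqLen (M : L2Model) (s l : M.Num) : Prop := ∃ e, pairRel M l e s

/-- The `i`-th entry of the sequence coded by `s` is `r`. -/
def seqEntry (M : L2Model) (s i r : M.Num) : Prop :=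
  ∃ l e c d, pairRel M l e s ∧ pairRel M c d e ∧ betaRel M c d i r

/-- `s` codes a finite binary sequence. -/
def BinSeqCode (M : L2Model) (s : M.Num) : Prop :=
  ∃ l, seqLen M s l ∧ ∀ i, M.lt i l → ∀ r, seqEntry M s i r →
    M.lt r (M.succ (M.succ M.zero))

/-- The sequence coded by `t` extends the sequence coded by `s`. -/
def SeqExt (M : L2Model) (s t : M.Num) : Prop :=
  ∃ ls lt', seqLen M s ls ∧ seqLen M t lt' ∧ (M.lt ls lt' ∨ ls = lt') ∧
    ∀ i, M.lt i ls → ∀ r, (seqEntry M s i r ↔ seqEntry M t i r)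

/-- `P` is (a set of codes of) a binary tree, closed under initial segments. -/
def TreeSem (M : L2Model) (P : Set M.Num) : Prop :=
  (∀ s ∈ P, BinSeqCode M s) ∧
  ∀ s ∈ P, ∀ t, BinSeqCode M t → SeqExt M t s → t ∈ P

/-- A perfect tree: every node has two incomparable extensions in the tree. -/
def PerfectTreeSem (M : L2Model) (P : Set M.Num) : Prop :=
  TreeSem M P ∧ P.Nonempty ∧
  ∀ s ∈ P, ∃ t₁ ∈ P, ∃ t₂ ∈ P, SeqExt M s t₁ ∧ SeqExt M s t₂ ∧
    ¬ SeqExt M t₁ t₂ ∧ ¬ SeqExt M t₂ t₁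

/-- An infinite binary tree. -/
def InfTreeSem (M : L2Model) (P : Set M.Num) : Prop :=
  TreeSem M P ∧ ∀ l : M.Num, ∃ s ∈ P, ∃ l', seqLen M s l' ∧ (M.lt l l' ∨ l = l')

/-- `X` is a path through the tree `P`. -/
def PathSem (M : L2Model) (X P : Set M.Num) : Prop :=
  ∀ l : M.Num, ∃ s ∈ P, seqLen M s l ∧
    ∀ i, M.lt i l → ((i ∈ X) ↔ seqEntry M s i (M.succ M.zero))

/-- Weak König's lemma. -/
def WKLax (M : L2Model) : Prop :=
  ∀ P ∈ M.Sets, InfTreeSem M P → ∃ X ∈ M.Sets, PathSem M X P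

/-- Henkin model of WKL₀ (= RCA₀ + weak König's lemma). -/
def ModelOfWKL (M : L2Model) : Prop :=
  M.base ∧ M.indAx ∧ Delta01CAax M ∧ Sigma01IndAx M ∧ WKLax M

/-- Provability from a class of models: semantic consequence over Henkin models,
which by the completeness theorem coincides with provability. (For formulas with free
variables this is validity of the universal closure.) -/
def Provable (C : L2Model → Prop) (φ : Fml) : Prop :=
  ∀ M : L2Model, C M → ∀ (v : ℕ → M.Num) (A : ℕ → Set M.Num),
    (∀ i, A i ∈ M.Sets) → Sat M v A φ

/-- `f ∈ M.Sets` codes an isomorphism of the orderings `W` and `R`. -/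
def OrderIsoSem (M : L2Model) (W R : Set M.Num) : Prop :=
  ∃ f ∈ M.Sets,
    (∀ a ∈ fieldOf M W, ∃ b, inPair M a b f ∧ b ∈ fieldOf M R) ∧
    (∀ a b b', inPair M a b f → inPair M a b' f → b = b') ∧
    (∀ a a' b, inPair M a b f → inPair M a' b f → a = a') ∧
    (∀ b ∈ fieldOf M R, ∃ a, a ∈ fieldOf M W ∧ inPair M a b f) ∧
    (∀ a a' b b', inPair M a b f → inPair M a' b' f →
      (inPair M a a' W ↔ inPair M b b' R))

/-! Recursion-theoretic notions over the true naturals. -/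

/-- A recursive (computable) set of naturals. -/
def RecSet (X : Set ℕ) : Prop := ComputablePred fun n => n ∈ X

/-- Partial functions recursive in the oracle `O` (Kleene-style). -/
inductive RecIn (O : ℕ → ℕ) : (ℕ →. ℕ) → Prop
  | zero : RecIn O fun _ => Part.some 0
  | succ : RecIn O fun n => Part.some (n + 1)
  | left : RecIn O fun n => Part.some (Nat.unpair n).1
  | right : RecIn O fun n => Part.some (Nat.unpair n).2
  | oracle : RecIn O fun n => Part.some (O n)
  | pair {f g} : RecIn O f → RecIn O g → RecIn O fun n => Nat.pair <$> f n <*> g n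
  | comp {f g} : RecIn O f → RecIn O g → RecIn O fun n => g n >>= f
  | prec {f g} : RecIn O f → RecIn O g →
      RecIn O (Nat.unpaired fun a n =>
        n.rec (f a) fun y IH => do {let i ← IH; g (Nat.pair a (Nat.pair y i))})
  | rfind {f} : RecIn O f →
      RecIn O fun a => Nat.rfind fun n => (fun m => m = 0) <$> f (Nat.pair a n)

open Classical in
/-- Characteristic function of a set of naturals. -/
noncomputable def chiF (X : Set ℕ) : ℕ → ℕ := fun n => if n ∈ X then 1 else 0

/-- Turing reducibility. -/
def TuringLe (X Y : Set ℕ) : Prop := RecIn (chiF Y) fun n => Part.some (chiF X n)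

/-! Perfect trees over the true naturals (external version). -/

def PrefixClosed (P : Set (List Bool)) : Prop := ∀ s ∈ P, ∀ t : List Bool, t <+: s → t ∈ P

def PerfectTreeExt (P : Set (List Bool)) : Prop :=
  PrefixClosed P ∧ P.Nonempty ∧
  ∀ s ∈ P, ∃ t₁ ∈ P, ∃ t₂ ∈ P, s <+: t₁ ∧ s <+: t₂ ∧ ¬ t₁ <+: t₂ ∧ ¬ t₂ <+: t₁

def IsPathExt (f : ℕ → Bool) (P : Set (List Bool)) : Prop :=
  ∀ n : ℕ, (List.ofFn fun i : Fin n => f i) ∈ P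

def pathSet (f : ℕ → Bool) : Set ℕ := {n | f n = true}


/-! Gandy-style forcing over an arbitrary (countable) Henkin model `(N, 𝒮)`:
conditions are internal codes (elements of `M.Num`) of finite sets of pairs
`⟨e, s⟩` where `s` codes a finite sequence of indices. -/

/-- `c` occurs as an entry of the (code of a) finite set `p`. -/
def entryIn (M : L2Model) (p c : M.Num) : Prop :=
  ∃ l j, seqLen M p l ∧ M.lt j l ∧ seqEntry M p j c

/-- The join `X_{n₁} ⊕ ⋯ ⊕ X_{n_k}` where `s` codes the sequence `⟨n₁,…,n_k⟩`. -/
def joinM (M : L2Model) (s : M.Num) (Xs : M.Num → Set M.Num) : Set M.Num :=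
  {c | ∃ i m ni, pairRel M i m c ∧ (∃ l, seqLen M s l ∧ M.lt i l) ∧
    seqEntry M s i ni ∧ m ∈ Xs ni}

/-- `⟨X_n⟩_{n ∈ |N|}` meets the condition `p`. -/
def MeetsM (M : L2Model) (S : M.Num → Set (Set M.Num))
    (Xs : M.Num → Set M.Num) (p : M.Num) : Prop :=
  ∀ c, entryIn M p c → ∀ e s, pairRel M e s c → joinM M s Xs ∈ S e

/-- The forcing poset `𝒫_{(N,𝒮)}` of meetable conditions. -/
def CondM (M : L2Model) (S : M.Num → Set (Set M.Num)) : Set M.Num :=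
  {p | ∃ Xs : M.Num → Set M.Num, MeetsM M S Xs p}

/-- `p` extends `q` (contains all of `q`'s entries). -/
def extendsC (M : L2Model) (p q : M.Num) : Prop :=
  ∀ c, entryIn M q c → entryIn M p c

def DenseM (M : L2Model) (P D : Set M.Num) : Prop :=
  D ⊆ P ∧ ∀ p ∈ P, ∃ q ∈ D, extendsC M q p

/-- `D` is definable over the model `(N,𝒮)` (with parameters). -/
def DefinableOverModel (M : L2Model) (D : Set M.Num) : Prop :=
  ∃ (φ : Fml) (v : ℕ → M.Num) (A : ℕ → Set M.Num), (∀ i, A i ∈ M.Sets) ∧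
    ∀ a : M.Num, a ∈ D ↔ Sat M (Function.update v 0 a) A φ

/-- Replace the second-order part of a model. -/
def withSets (M : L2Model) (𝒮 : Set (Set M.Num)) : L2Model :=
  ⟨M.Num, M.zero, M.succ, M.add, M.mul, 𝒮⟩

/-- The full model over the same first-order part. -/
def fullOf (M : L2Model) : L2Model := withSets M Set.univ

/-- `𝒞` is a Σ¹₁ class of subsets of `|N|` in the sense of the model `N`. -/
def Sigma11ClassM (M : L2Model) (𝒞 : Set (Set M.Num)) : Prop :=
  ∃ φ : Fml, φ.sigma11 ∧
    ∀ X : Set M.Num, X ∈ 𝒞 ↔ Sat (fullOf M) (fun _ => M.zero) (fun _ => X) φ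

/-- `S` enumerates the Σ¹₁ classes in the sense of the model. -/
def IsS11EnumM (M : L2Model) (S : M.Num → Set (Set M.Num)) : Prop :=
  (∀ e, Sigma11ClassM M (S e)) ∧ ∀ 𝒞, Sigma11ClassM M 𝒞 → ∃ e, S e = 𝒞

/-- `⟨G_n⟩_{n∈|N|}` is generic over `(N, 𝒮)`: it meets every dense subset of
`𝒫_{(N,𝒮)}` definable over `(N, 𝒮)`. -/
def GenericOverModel (M : L2Model) (S : M.Num → Set (Set M.Num))
    (G : M.Num → Set M.Num) : Prop :=
  ∀ D : Set M.Num, DenseM M (CondM M S) D → DefinableOverModel M D →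
    ∃ p ∈ D, MeetsM M S G p

end SOA

/-!
A Σ¹₁ class `{Z | ∃ W, ψ(Z, W)}` with `ψ` arithmetical is the projection of a closed set: reading
the witnesses of all unbounded quantifiers of `ψ`, of either polarity, off a Skolem function `h`
indexed by positions in the evaluation tree turns `ψ(Z, W)` into a condition on `(Z, W, h)` that
is decided by finite approximations. Fixing an initial segment (a stem) of `(h, W)` gives again a
Σ¹₁ class, hence a forcing condition. The generic sequence is built by fusion: the dense sets
definable over HYP are countably many; at stage `n` the current condition is extended into the
`n`-th of them, the stem of each of its entries is lengthened, and the bits `j ∈ G_i` with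
`i, j < n` are decided. For an entry `(e, l)`, the join of `G` along `l` is then a limit of members
of ever finer stem refinements of `S e`, and closedness puts it into `S e`.
-/

namespace SOA

lemma exists_seq_of_forall_exists {α : Type*} {P : α → Prop} {R : ℕ → α → α → Prop} {a₀ : α}
    (h₀ : P a₀) (h : ∀ n a, P a → ∃ b, P b ∧ R n a b) :
    ∃ f : ℕ → α, f 0 = a₀ ∧ ∀ n, P (f n) ∧ R n (f n) (f (n + 1)) := by
  choose! g hg using h
  let f : ℕ → α := fun n => Nat.rec a₀ g n
  have hf : ∀ n, P (f n) := fun n => Nat.rec h₀ (fun n ih => (hg n _ ih).1) n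
  exact ⟨f, rfl, fun n => ⟨hf n, (hg n _ (hf n)).2⟩⟩

lemma forall_or_forall_of_antitone {P Q : ℕ → Prop} (hP : Antitone P) (hQ : Antitone Q)
    (h : ∀ n, P n ∨ Q n) : (∀ n, P n) ∨ ∀ n, Q n := by
  by_contra! ⟨⟨m, hm⟩, ⟨n, hn⟩⟩
  rcases h (max m n) with hmn | hmn
  · exact hm (hP (le_max_left m n) hmn)
  · exact hn (hQ (le_max_right m n) hmn)

lemma exists_lt_forall_of_antitone {N : ℕ} {P : ℕ → ℕ → Prop} (hP : ∀ a, Antitone (P a))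
    (h : ∀ n, ∃ a < N, P a n) : ∃ a < N, ∀ n, P a n := by
  by_contra! hc
  choose! m hm using hc
  obtain ⟨a, ha, hPa⟩ := h ((Finset.range N).sup m)
  exact hm a ha (hP a (Finset.le_sup (Finset.mem_range.2 ha)) hPa)

/-- `stdModel Set.univ`, spelled out so that its number sort is reducibly `ℕ`. -/
abbrev stdFull : L2Model := ⟨ℕ, 0, Nat.succ, (· + ·), (· * ·), Set.univ⟩

/-! ### Satisfaction in the full standard model -/

section StdFull

def Term.eval (v : ℕ → ℕ) : Term → ℕ
  | .var n => v n
  | .zero => 0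
  | .succ t => t.eval v + 1
  | .add t u => t.eval v + u.eval v
  | .mul t u => t.eval v * u.eval v

@[simp] lemma Term.eval_var {v : ℕ → ℕ} {n : ℕ} : (Term.var n).eval v = v n := rfl
@[simp] lemma Term.eval_succ {v : ℕ → ℕ} {t : Term} : t.succ.eval v = t.eval v + 1 := rfl

lemma Term.val_stdFull (v : ℕ → ℕ) (t : Term) : t.val stdFull v = t.eval v := by
  induction t with
  | var n => rfl
  | zero => rfl
  | succ t ih => exact congrArg Nat.succ ih
  | add t u iht ihu => exact congrArg₂ Nat.add iht ihu
  | mul t u iht ihu => exact congrArg₂ Nat.mul iht ihu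

lemma stdModel_lt {𝒮 : Set (Set ℕ)} {a b : ℕ} : (stdModel 𝒮).lt a b ↔ a < b :=
  ⟨fun ⟨k, hk⟩ => by simp only [stdModel] at hk; omega,
   fun h => ⟨b - a - 1, by simp only [stdModel]; omega⟩⟩

variable {M : L2Model} {v : ℕ → ℕ} {A : ℕ → Set ℕ} {x i : ℕ} {t u : Term} {φ ψ : Fml}

@[simp] lemma sat_eq : Sat stdFull v A (.eq t u) ↔ t.eval v = u.eval v := by
  rw [← Term.val_stdFull v t, ← Term.val_stdFull v u]; rfl

@[simp] lemma sat_lt : Sat stdFull v A (.lt t u) ↔ t.eval v < u.eval v := by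
  rw [← Term.val_stdFull v t, ← Term.val_stdFull v u]; exact stdModel_lt

@[simp] lemma sat_mem : Sat stdFull v A (.mem t i) ↔ t.eval v ∈ A i := by
  rw [← Term.val_stdFull v t]; rfl

@[simp] lemma sat_not {v : ℕ → M.Num} {A : ℕ → Set M.Num} :
    Sat M v A (.not φ) ↔ ¬ Sat M v A φ := Iff.rfl

@[simp] lemma sat_and {v : ℕ → M.Num} {A : ℕ → Set M.Num} :
    Sat M v A (.and φ ψ) ↔ Sat M v A φ ∧ Sat M v A ψ := Iff.rfl

@[simp] lemma sat_nall {v : ℕ → M.Num} {A : ℕ → Set M.Num} :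
    Sat M v A (.nall x φ) ↔ ∀ a, Sat M (Function.update v x a) A φ := Iff.rfl

@[simp] lemma sat_nex {v : ℕ → M.Num} {A : ℕ → Set M.Num} :
    Sat M v A (.nex x φ) ↔ ∃ a, Sat M (Function.update v x a) A φ := Iff.rfl

@[simp] lemma sat_ballLt :
    Sat stdFull v A (.ballLt x t φ) ↔ ∀ a < t.eval v, Sat stdFull (Function.update v x a) A φ := by
  rw [← Term.val_stdFull v t]
  exact forall_congr' fun a => imp_congr stdModel_lt Iff.rfl

@[simp] lemma sat_bexLt :
    Sat stdFull v A (.bexLt x t φ) ↔ ∃ a < t.eval v, Sat stdFull (Function.update v x a) A φ := by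
  rw [← Term.val_stdFull v t]
  exact exists_congr fun a => and_congr stdModel_lt Iff.rfl

def numeral : ℕ → Term
  | 0 => .zero
  | n + 1 => .succ (numeral n)

@[simp] lemma Term.eval_numeral (v : ℕ → ℕ) (n : ℕ) : (numeral n).eval v = n := by
  induction n with
  | zero => rfl
  | succ n ih => simp [numeral, ih]

def Fml.or (φ ψ : Fml) : Fml := .not ((φ.not).and (ψ.not))
def Fml.imp (φ ψ : Fml) : Fml := .not (φ.and ψ.not)

@[simp] lemma sat_or {v : ℕ → M.Num} {A : ℕ → Set M.Num} :
    Sat M v A (φ.or ψ) ↔ Sat M v A φ ∨ Sat M v A ψ := by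
  simp only [Fml.or, sat_not, sat_and]; tauto

@[simp] lemma sat_imp {v : ℕ → M.Num} {A : ℕ → Set M.Num} :
    Sat M v A (φ.imp ψ) ↔ (Sat M v A φ → Sat M v A ψ) := by
  simp only [Fml.imp, sat_not, sat_and]; tauto

def Fml.isPair (t u w : Term) : Fml :=
  ((Fml.lt t u).and (.eq w (.add (.mul u u) t))).or
    ((Fml.not (.lt t u)).and (.eq w (.add (.add (.mul t t) t) u)))

lemma Fml.arithmetical_isPair {w : Term} : (Fml.isPair t u w).arithmetical :=
  ⟨⟨trivial, trivial⟩, ⟨trivial, trivial⟩⟩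

@[simp] lemma sat_isPair {w : Term} :
    Sat stdFull v A (Fml.isPair t u w) ↔ Nat.pair (t.eval v) (u.eval v) = w.eval v := by
  simp only [Fml.isPair, sat_or, sat_and, sat_not, sat_lt, sat_eq, Term.eval, Nat.pair]
  split_ifs with h <;> grind

end StdFull

/-! ### Formulas whose number and set variables are all even -/

section EvenVars

def Term.EvenVars : Term → Prop
  | .var n => n % 2 = 0
  | .zero => True
  | .succ t => t.EvenVars
  | .add t u => t.EvenVars ∧ u.EvenVars
  | .mul t u => t.EvenVars ∧ u.EvenVars

def Fml.EvenVars : Fml → Prop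
  | .eq t u => t.EvenVars ∧ u.EvenVars
  | .lt t u => t.EvenVars ∧ u.EvenVars
  | .mem t i => t.EvenVars ∧ i % 2 = 0
  | .not φ => φ.EvenVars
  | .and φ ψ => φ.EvenVars ∧ ψ.EvenVars
  | .nall x φ => x % 2 = 0 ∧ φ.EvenVars
  | .nex x φ => x % 2 = 0 ∧ φ.EvenVars
  | .ballLt x t φ => x % 2 = 0 ∧ t.EvenVars ∧ φ.EvenVars
  | .bexLt x t φ => x % 2 = 0 ∧ t.EvenVars ∧ φ.EvenVars
  | .sall _ _ => False
  | .sex _ _ => False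

def Term.Avoids : Term → ℕ → Prop
  | .var n, y => n ≠ y
  | .zero, _ => True
  | .succ t, y => t.Avoids y
  | .add t u, y => t.Avoids y ∧ u.Avoids y
  | .mul t u, y => t.Avoids y ∧ u.Avoids y

lemma Term.eval_update_of_avoids {t : Term} {y : ℕ} (h : t.Avoids y) (v : ℕ → ℕ) (a : ℕ) :
    t.eval (Function.update v y a) = t.eval v := by
  induction t with
  | var n => exact Function.update_of_ne h _ _
  | zero => rfl
  | succ t ih => simp [ih h]
  | add t u iht ihu => simp [Term.eval, iht h.1, ihu h.2]
  | mul t u iht ihu => simp [Term.eval, iht h.1, ihu h.2]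

lemma Term.avoids_numeral (c y : ℕ) : (numeral c).Avoids y := by
  induction c with
  | zero => trivial
  | succ c ih => exact ih

lemma Term.EvenVars.avoids {t : Term} (ht : t.EvenVars) {y : ℕ} (hy : y % 2 = 1) : t.Avoids y := by
  induction t with
  | var n => rintro rfl; rw [ht] at hy; cases hy
  | zero => trivial
  | succ t ih => exact ih ht
  | add t u iht ihu => exact ⟨iht ht.1, ihu ht.2⟩
  | mul t u iht ihu => exact ⟨iht ht.1, ihu ht.2⟩

lemma Term.EvenVars.eval_congr {t : Term} (ht : t.EvenVars) {v w : ℕ → ℕ}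
    (h : ∀ x, x % 2 = 0 → v x = w x) : t.eval v = t.eval w := by
  induction t with
  | var n => exact h n ht
  | zero => rfl
  | succ t ih => simp [ih ht]
  | add t u iht ihu => simp [Term.eval, iht ht.1, ihu ht.2]
  | mul t u iht ihu => simp [Term.eval, iht ht.1, ihu ht.2]

def Term.doubleVars : Term → Term
  | .var n => .var (2 * n)
  | .zero => .zero
  | .succ t => .succ t.doubleVars
  | .add t u => .add t.doubleVars u.doubleVars
  | .mul t u => .mul t.doubleVars u.doubleVars

lemma Term.val_doubleVars {M : L2Model} (t : Term) (v : ℕ → M.Num) :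
    t.doubleVars.val M v = t.val M (fun x => v (2 * x)) := by
  induction t with
  | var n => rfl
  | zero => rfl
  | succ t ih => simp only [Term.doubleVars, Term.val, ih]
  | add t u iht ihu => simp only [Term.doubleVars, Term.val, iht, ihu]
  | mul t u iht ihu => simp only [Term.doubleVars, Term.val, iht, ihu]

lemma Term.evenVars_doubleVars (t : Term) : t.doubleVars.EvenVars := by
  induction t with
  | var n => simp [Term.doubleVars, Term.EvenVars]
  | zero => trivial
  | succ t ih => exact ih
  | add t u iht ihu => exact ⟨iht, ihu⟩
  | mul t u iht ihu => exact ⟨iht, ihu⟩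

def Fml.doubleVars : Fml → Fml
  | .eq t u => .eq t.doubleVars u.doubleVars
  | .lt t u => .lt t.doubleVars u.doubleVars
  | .mem t i => .mem t.doubleVars (2 * i)
  | .not φ => .not φ.doubleVars
  | .and φ ψ => .and φ.doubleVars ψ.doubleVars
  | .nall x φ => .nall (2 * x) φ.doubleVars
  | .nex x φ => .nex (2 * x) φ.doubleVars
  | .ballLt x t φ => .ballLt (2 * x) t.doubleVars φ.doubleVars
  | .bexLt x t φ => .bexLt (2 * x) t.doubleVars φ.doubleVars
  | .sall X φ => .sall X φ.doubleVars
  | .sex X φ => .sex X φ.doubleVars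

variable {φ : Fml}

lemma Fml.arithmetical.doubleVars (h : φ.arithmetical) : φ.doubleVars.arithmetical := by
  induction φ with
  | eq | lt | mem => trivial
  | not φ ih | nall x φ ih | nex x φ ih | ballLt x t φ ih | bexLt x t φ ih => exact ih h
  | and φ ψ ih1 ih2 => exact ⟨ih1 h.1, ih2 h.2⟩
  | sall | sex => exact h.elim

lemma Fml.arithmetical.evenVars_doubleVars (h : φ.arithmetical) : φ.doubleVars.EvenVars := by
  induction φ with
  | eq t u | lt t u => exact ⟨t.evenVars_doubleVars, u.evenVars_doubleVars⟩
  | mem t i => exact ⟨t.evenVars_doubleVars, by omega⟩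
  | not φ ih => exact ih h
  | and φ ψ ih1 ih2 => exact ⟨ih1 h.1, ih2 h.2⟩
  | nall x φ ih | nex x φ ih => exact ⟨by omega, ih h⟩
  | ballLt x t φ ih | bexLt x t φ ih => exact ⟨by omega, t.evenVars_doubleVars, ih h⟩
  | sall | sex => exact h.elim

lemma update_comp_two_mul {α : Type} (v : ℕ → α) (x : ℕ) (a : α) :
    (fun y => Function.update v (2 * x) a (2 * y)) = Function.update (fun y => v (2 * y)) x a := by
  funext y
  by_cases hy : y = x
  · subst hy; simp
  · rw [Function.update_of_ne (by omega), Function.update_of_ne hy]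

lemma Fml.arithmetical.sat_doubleVars {M : L2Model} (hφ : φ.arithmetical)
    (v : ℕ → M.Num) (A : ℕ → Set M.Num) :
    Sat M v A φ.doubleVars ↔ Sat M (fun x => v (2 * x)) (fun i => A (2 * i)) φ := by
  induction φ generalizing v with
  | eq | lt | mem => simp only [Fml.doubleVars, Sat, Term.val_doubleVars]
  | not φ ih => simp only [Fml.doubleVars, Sat, ih hφ]
  | and φ ψ ih1 ih2 => simp only [Fml.doubleVars, Sat, ih1 hφ.1, ih2 hφ.2]
  | nall x φ ih | nex x φ ih | ballLt x t φ ih | bexLt x t φ ih =>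
      simp only [Fml.doubleVars, Sat, Term.val_doubleVars, ih hφ, update_comp_two_mul]
  | sall | sex => exact hφ.elim

end EvenVars

/-! ### Traces: numerical codes of positions in the evaluation tree of a formula -/

section Trace

def traceChild (tr a : ℕ) : ℕ := Nat.pair tr a + 1
def traceParent (x : ℕ) : ℕ := (Nat.unpair (x - 1)).1

def InCone (t x : ℕ) : Prop := ∃ k, traceParent^[k] x = t

@[simp] lemma traceParent_traceChild {tr a : ℕ} : traceParent (traceChild tr a) = tr := by
  simp [traceParent, traceChild]

lemma lt_traceChild {tr a : ℕ} : tr < traceChild tr a :=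
  Nat.lt_succ_of_le (Nat.left_le_pair _ _)

lemma iterate_traceParent_le (k x : ℕ) : traceParent^[k] x ≤ x := by
  induction k generalizing x with
  | zero => rfl
  | succ k ih =>
      rw [Function.iterate_succ_apply]
      exact (ih _).trans ((Nat.unpair_left_le _).trans (Nat.sub_le _ _))

lemma InCone.refl (t : ℕ) : InCone t t := ⟨0, rfl⟩

lemma InCone.le {t x : ℕ} (h : InCone t x) : t ≤ x := by
  obtain ⟨k, rfl⟩ := h; exact iterate_traceParent_le k x

lemma InCone.of_child {tr a x : ℕ} (h : InCone (traceChild tr a) x) : InCone tr x := by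
  obtain ⟨k, hk⟩ := h
  exact ⟨k + 1, by rw [Function.iterate_succ_apply', hk, traceParent_traceChild]⟩

lemma not_inCone_child_self {tr a : ℕ} : ¬ InCone (traceChild tr a) tr :=
  fun h => h.le.not_gt lt_traceChild

lemma InCone.child_inj {tr a b x : ℕ} (ha : InCone (traceChild tr a) x)
    (hb : InCone (traceChild tr b) x) : a = b := by
  wlog hjk : ha.choose ≤ hb.choose generalizing a b
  · exact (this hb ha (by omega)).symm
  obtain ⟨m, hm⟩ := Nat.exists_eq_add_of_le hjk
  have key : traceParent^[m] (traceChild tr a) = traceChild tr b := by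
    rw [← ha.choose_spec, ← Function.iterate_add_apply, add_comm, ← hm, hb.choose_spec]
  cases m with
  | zero => simpa [traceChild, Nat.pair_eq_pair] using key
  | succ m =>
      rw [Function.iterate_succ_apply, traceParent_traceChild] at key
      exact absurd (key ▸ iterate_traceParent_le m tr) (not_le.mpr lt_traceChild)

end Trace

/-! ### Skolemized satisfaction -/

section SkSat

/-- Satisfaction (`b = true`) or refutation (`b = false`) of an arithmetical formula in which every
unbounded existential witness, of either polarity, is read off the Skolem function `h` at the
current trace `tr`. -/
def SkSat (h : ℕ → ℕ) : Fml → Bool → ℕ → (ℕ → ℕ) → (ℕ → Set ℕ) → Prop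
  | .eq t u, b, _, v, _ => (t.eval v = u.eval v ↔ b = true)
  | .lt t u, b, _, v, _ => (t.eval v < u.eval v ↔ b = true)
  | .mem t i, b, _, v, A => (t.eval v ∈ A i ↔ b = true)
  | .not φ, b, tr, v, A => SkSat h φ (!b) tr v A
  | .and φ ψ, true, tr, v, A =>
      SkSat h φ true (traceChild tr 0) v A ∧ SkSat h ψ true (traceChild tr 1) v A
  | .and φ ψ, false, tr, v, A =>
      SkSat h φ false (traceChild tr 0) v A ∨ SkSat h ψ false (traceChild tr 1) v A
  | .nall x φ, true, tr, v, A => ∀ a, SkSat h φ true (traceChild tr a) (Function.update v x a) A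
  | .nall x φ, false, tr, v, A =>
      SkSat h φ false (traceChild tr (h tr)) (Function.update v x (h tr)) A
  | .nex x φ, true, tr, v, A =>
      SkSat h φ true (traceChild tr (h tr)) (Function.update v x (h tr)) A
  | .nex x φ, false, tr, v, A => ∀ a, SkSat h φ false (traceChild tr a) (Function.update v x a) A
  | .ballLt x t φ, true, tr, v, A =>
      ∀ a < t.eval v, SkSat h φ true (traceChild tr a) (Function.update v x a) A
  | .ballLt x t φ, false, tr, v, A =>
      ∃ a < t.eval v, SkSat h φ false (traceChild tr a) (Function.update v x a) A
  | .bexLt x t φ, true, tr, v, A =>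
      ∃ a < t.eval v, SkSat h φ true (traceChild tr a) (Function.update v x a) A
  | .bexLt x t φ, false, tr, v, A =>
      ∀ a < t.eval v, SkSat h φ false (traceChild tr a) (Function.update v x a) A
  | .sall _ _, _, _, _, _ => False
  | .sex _ _, _, _, _, _ => False

variable {φ : Fml} {h h' : ℕ → ℕ} {b : Bool} {tr : ℕ} {v : ℕ → ℕ} {A : ℕ → Set ℕ}

lemma SkSat.sound (hφ : φ.arithmetical) (hq : SkSat h φ b tr v A) :
    Sat stdFull v A φ ↔ b = true := by
  induction φ generalizing b tr v with
  | eq | lt | mem => simpa [SkSat] using hq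
  | not φ ih => cases b <;> simpa using ih hφ hq
  | and φ ψ ih₁ ih₂ =>
      cases b
      · rcases hq with hq | hq
        · simpa using fun h _ => (ih₁ hφ.1 hq).mp h
        · simpa using fun _ h => (ih₂ hφ.2 hq).mp h
      · simp [ih₁ hφ.1 hq.1, ih₂ hφ.2 hq.2]
  | nall x φ ih =>
      cases b
      · simpa using ⟨_, by simpa using ih hφ hq⟩
      · simpa using fun a => (ih hφ (hq a)).mpr rfl
  | nex x φ ih =>
      cases b
      · simpa using fun a => by simpa using ih hφ (hq a)
      · simpa using ⟨_, (ih hφ hq).mpr rfl⟩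
  | ballLt x t φ ih =>
      cases b
      · obtain ⟨a, ha, hq⟩ := hq
        simpa using ⟨a, ha, by simpa using ih hφ hq⟩
      · simpa using fun a ha => (ih hφ (hq a ha)).mpr rfl
  | bexLt x t φ ih =>
      cases b
      · simpa using fun a ha => by simpa using ih hφ (hq a ha)
      · obtain ⟨a, ha, hq⟩ := hq
        simpa using ⟨a, ha, (ih hφ hq).mpr rfl⟩
  | sall | sex => exact hφ.elim

lemma SkSat.congr_cone (hag : ∀ x, InCone tr x → h x = h' x) :
    SkSat h φ b tr v A ↔ SkSat h' φ b tr v A := by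
  have hag' : ∀ a x, InCone (traceChild tr a) x → h x = h' x := fun a x hx => hag x hx.of_child
  induction φ generalizing b tr v with
  | eq | lt | mem | sall | sex => exact Iff.rfl
  | not φ ih => exact ih hag hag'
  | and φ ψ ih₁ ih₂ =>
      cases b
      · exact or_congr (ih₁ (hag' 0) fun _ _ hx => hag' 0 _ hx.of_child)
          (ih₂ (hag' 1) fun _ _ hx => hag' 1 _ hx.of_child)
      · exact and_congr (ih₁ (hag' 0) fun _ _ hx => hag' 0 _ hx.of_child)
          (ih₂ (hag' 1) fun _ _ hx => hag' 1 _ hx.of_child)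
  | nall x φ ih | nex x φ ih | ballLt x t φ ih | bexLt x t φ ih =>
      cases b <;> simp only [SkSat, hag tr (.refl tr)] <;>
        first
        | exact ih (hag' _) fun _ _ hx => hag' _ _ hx.of_child
        | exact forall_congr' fun a => ih (hag' a) fun _ _ hx => hag' a _ hx.of_child
        | exact forall₂_congr fun a _ => ih (hag' a) fun _ _ hx => hag' a _ hx.of_child
        | exact exists_congr fun a => and_congr_right fun _ =>
            ih (hag' a) fun _ _ hx => hag' a _ hx.of_child

open Classical in
noncomputable def mergeCones (tr : ℕ) (F : ℕ → ℕ → ℕ) (x : ℕ) : ℕ :=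
  if hx : ∃ a, InCone (traceChild tr a) x then F hx.choose x else 0

lemma mergeCones_eq {F : ℕ → ℕ → ℕ} {a x : ℕ} (hx : InCone (traceChild tr a) x) :
    mergeCones tr F x = F a x := by
  have hex : ∃ a, InCone (traceChild tr a) x := ⟨a, hx⟩
  rw [mergeCones, dif_pos hex, hex.choose_spec.child_inj hx]

lemma exists_forall_skSat_child {P : ℕ → Prop} {χ : ℕ → Fml} {w : ℕ → ℕ → ℕ}
    (H : ∀ a, P a → ∃ h, SkSat h (χ a) b (traceChild tr a) (w a) A) :
    ∃ h, ∀ a, P a → SkSat h (χ a) b (traceChild tr a) (w a) A := by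
  choose! F hF using H
  exact ⟨mergeCones tr F, fun a ha =>
    (SkSat.congr_cone fun _ hx => mergeCones_eq hx).mpr (hF a ha)⟩

lemma exists_skSat_and {ψ : Fml} (h₁ : ∃ h, SkSat h φ b (traceChild tr 0) v A)
    (h₂ : ∃ h, SkSat h ψ b (traceChild tr 1) v A) :
    ∃ h, SkSat h φ b (traceChild tr 0) v A ∧ SkSat h ψ b (traceChild tr 1) v A := by
  obtain ⟨h, hq⟩ := exists_forall_skSat_child (P := fun a => a = 0 ∨ a = 1)
    (χ := fun a => if a = 0 then φ else ψ) (w := fun _ => v) (b := b) (tr := tr) (A := A)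
    (by rintro a (rfl | rfl) <;> simpa)
  exact ⟨h, by simpa using hq 0 (.inl rfl), by simpa using hq 1 (.inr rfl)⟩

lemma exists_skSat_skolem {x a : ℕ}
    (hq : ∃ h, SkSat h φ b (traceChild tr a) (Function.update v x a) A) :
    ∃ h', SkSat h' φ b (traceChild tr (h' tr)) (Function.update v x (h' tr)) A := by
  obtain ⟨h, hq⟩ := hq
  refine ⟨Function.update h tr a, ?_⟩
  rw [Function.update_self]
  refine (SkSat.congr_cone fun y hy => Function.update_of_ne ?_ a h).mpr hq
  rintro rfl
  exact not_inCone_child_self hy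

lemma exists_skSat (hφ : φ.arithmetical) (hs : Sat stdFull v A φ ↔ b = true) :
    ∃ h, SkSat h φ b tr v A := by
  induction φ generalizing b tr v with
  | eq | lt | mem => exact ⟨0, by simpa [SkSat] using hs⟩
  | not φ ih => exact ih hφ (by cases b <;> simpa using hs)
  | and φ ψ ih₁ ih₂ =>
      cases b
      · by_cases h₁ : Sat stdFull v A φ
        · exact (ih₂ hφ.2 (b := false) (tr := traceChild tr 1)
            (by simpa using fun h₂ => by simpa using hs.mp ⟨h₁, h₂⟩)).imp fun _ => .inr
        · exact (ih₁ hφ.1 (b := false) (tr := traceChild tr 0) (by simpa using h₁)).imp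
            fun _ => .inl
      · obtain ⟨hs₁, hs₂⟩ := by simpa using hs
        exact exists_skSat_and (ih₁ hφ.1 (by simpa using hs₁)) (ih₂ hφ.2 (by simpa using hs₂))
  | nall x φ ih =>
      cases b
      · obtain ⟨a, ha⟩ : ∃ a, ¬ Sat stdFull (Function.update v x a) A φ := by simpa using hs
        exact exists_skSat_skolem (ih hφ (by simpa using ha))
      · have hs : ∀ a, Sat stdFull (Function.update v x a) A φ := by simpa using hs
        obtain ⟨h, hq⟩ := exists_forall_skSat_child (P := fun _ => True) (χ := fun _ => φ)
          (w := fun a => Function.update v x a) (b := true)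
          (fun a _ => ih hφ (by simpa using hs a))
        exact ⟨h, fun a => hq a trivial⟩
  | nex x φ ih =>
      cases b
      · have hs : ∀ a, ¬ Sat stdFull (Function.update v x a) A φ := by simpa using hs
        obtain ⟨h, hq⟩ := exists_forall_skSat_child (P := fun _ => True) (χ := fun _ => φ)
          (w := fun a => Function.update v x a) (b := false)
          (fun a _ => ih hφ (by simpa using hs a))
        exact ⟨h, fun a => hq a trivial⟩
      · obtain ⟨a, ha⟩ : ∃ a, Sat stdFull (Function.update v x a) A φ := by simpa using hs
        exact exists_skSat_skolem (ih hφ (by simpa using ha))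
  | ballLt x t φ ih =>
      cases b
      · obtain ⟨a, hat, ha⟩ : ∃ a < t.eval v, ¬ Sat stdFull (Function.update v x a) A φ := by
          simpa using hs
        obtain ⟨h, hq⟩ := ih hφ (b := false) (tr := traceChild tr a) (by simpa using ha)
        exact ⟨h, a, hat, hq⟩
      · have hs : ∀ a < t.eval v, Sat stdFull (Function.update v x a) A φ := by simpa using hs
        exact exists_forall_skSat_child (χ := fun _ => φ)
          (fun a hat => ih hφ (by simpa using hs a hat))
  | bexLt x t φ ih =>
      cases b
      · have hs : ∀ a < t.eval v, ¬ Sat stdFull (Function.update v x a) A φ := by simpa using hs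
        exact exists_forall_skSat_child (χ := fun _ => φ)
          (fun a hat => ih hφ (by simpa using hs a hat))
      · obtain ⟨a, hat, ha⟩ : ∃ a < t.eval v, Sat stdFull (Function.update v x a) A φ := by
          simpa using hs
        obtain ⟨h, hq⟩ := ih hφ (b := true) (tr := traceChild tr a) (by simpa using ha)
        exact ⟨h, a, hat, hq⟩
  | sall | sex => exact hφ.elim

lemma sat_iff_exists_skSat (hφ : φ.arithmetical) :
    Sat stdFull v A φ ↔ ∃ h, SkSat h φ true tr v A :=
  ⟨fun hs => exists_skSat hφ (iff_of_true hs rfl), fun ⟨_, hq⟩ => (hq.sound hφ).mpr rfl⟩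

def AgreeBelow (n : ℕ) (A A' : ℕ → Set ℕ) (h h' : ℕ → ℕ) : Prop :=
  (∀ i < n, ∀ j < n, (j ∈ A' i ↔ j ∈ A i)) ∧ ∀ k < n, h' k = h k

def ApproxSkSat (A : ℕ → Set ℕ) (h : ℕ → ℕ) (φ : Fml) (b : Bool) (tr : ℕ) (v : ℕ → ℕ)
    (n : ℕ) : Prop :=
  ∃ A' h', AgreeBelow n A A' h h' ∧ SkSat h' φ b tr v A'

lemma antitone_approxSkSat : Antitone (ApproxSkSat A h φ b tr v) :=
  fun _ _ hnm ⟨A', h', ⟨hA, hh⟩, hq⟩ =>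
    ⟨A', h', ⟨fun i hi j hj => hA i (by omega) j (by omega), fun k hk => hh k (by omega)⟩, hq⟩

lemma approxSkSat_skolem {x : ℕ}
    (happ : ∀ n, ∃ A' h', AgreeBelow n A A' h h' ∧
      SkSat h' φ b (traceChild tr (h' tr)) (Function.update v x (h' tr)) A') (n : ℕ) :
    ApproxSkSat A h φ b (traceChild tr (h tr)) (Function.update v x (h tr)) n := by
  obtain ⟨A', h', hag, hq⟩ := happ (max n (tr + 1))
  rw [hag.2 tr (by omega)] at hq
  exact antitone_approxSkSat (le_max_left n _) ⟨A', h', hag, hq⟩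

/-- `SkSat h φ b tr v A` is a closed condition on `(A, h)`. -/
lemma SkSat.of_forall_approx (hφ : φ.arithmetical) (happ : ∀ n, ApproxSkSat A h φ b tr v n) :
    SkSat h φ b tr v A := by
  induction φ generalizing b tr v with
  | eq | lt | sall | sex => obtain ⟨_, _, _, hq⟩ := happ 0; exact hq
  | mem t i =>
      obtain ⟨A', h', ⟨hA, -⟩, hq⟩ := happ (max i (t.eval v) + 1)
      exact (hA i (by omega) _ (by omega)).symm.trans hq
  | not φ ih => exact ih hφ happ
  | and φ ψ ih₁ ih₂ =>
      cases b
      · refine (forall_or_forall_of_antitone antitone_approxSkSat antitone_approxSkSat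
          fun n => ?_).imp (ih₁ hφ.1) (ih₂ hφ.2)
        obtain ⟨A', h', hag, hq | hq⟩ := happ n
        exacts [.inl ⟨A', h', hag, hq⟩, .inr ⟨A', h', hag, hq⟩]
      · exact ⟨ih₁ hφ.1 fun n => (happ n).imp fun _ => .imp fun _ => .imp_right (·.1),
          ih₂ hφ.2 fun n => (happ n).imp fun _ => .imp fun _ => .imp_right (·.2)⟩
  | nall x φ ih =>
      cases b
      · exact ih hφ (approxSkSat_skolem happ)
      · exact fun a => ih hφ fun n => (happ n).imp fun _ => .imp fun _ => .imp_right (· a)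
  | nex x φ ih =>
      cases b
      · exact fun a => ih hφ fun n => (happ n).imp fun _ => .imp fun _ => .imp_right (· a)
      · exact ih hφ (approxSkSat_skolem happ)
  | ballLt x t φ ih =>
      cases b
      · refine (exists_lt_forall_of_antitone (fun _ => antitone_approxSkSat) fun n => ?_).imp
          fun a => .imp_right (ih hφ)
        obtain ⟨A', h', hag, a, ha, hq⟩ := happ n
        exact ⟨a, ha, A', h', hag, hq⟩
      · exact fun a ha => ih hφ fun n => (happ n).imp fun _ => .imp fun _ => .imp_right (· a ha)
  | bexLt x t φ ih =>
      cases b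
      · exact fun a ha => ih hφ fun n => (happ n).imp fun _ => .imp fun _ => .imp_right (· a ha)
      · refine (exists_lt_forall_of_antitone (fun _ => antitone_approxSkSat) fun n => ?_).imp
          fun a => .imp_right (ih hφ)
        obtain ⟨A', h', hag, a, ha, hq⟩ := happ n
        exact ⟨a, ha, A', h', hag, hq⟩

end SkSat

/-! ### Skolemized satisfaction expressed by a formula -/

section Skolemize

def graphMemF (t u : Term) : Fml :=
  .nex 5 ((Fml.isPair t u (.var 5)).and
    (.nex 7 ((Fml.isPair (numeral 1) (.var 5) (.var 7)).and (.mem (.var 7) 1))))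

def witnessMemF (t : Term) : Fml :=
  .nex 5 ((Fml.isPair (numeral 0) t (.var 5)).and (.mem (.var 5) 1))

def otherTraceVar (p : ℕ) : ℕ := 4 - p

def bindChild (u : Term) (p : ℕ) (body : Fml) : Fml :=
  .nall (otherTraceVar p) (Fml.imp
    (.nex 5 ((Fml.isPair (.var p) u (.var 5)).and
      (.eq (.var (otherTraceVar p)) (.succ (.var 5)))))
    body)

def skolemBind (x p : ℕ) (body : Fml) : Fml :=
  .nex x ((graphMemF (.var p) (.var x)).and (bindChild (.var x) p body))

variable {v : ℕ → ℕ} {A : ℕ → Set ℕ} {t u : Term} {p : ℕ} {body : Fml}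

lemma sat_graphMemF (ht : t.Avoids 5) (hu : u.Avoids 5) :
    Sat stdFull v A (graphMemF t u) ↔ Nat.pair 1 (Nat.pair (t.eval v) (u.eval v)) ∈ A 1 := by
  simp [graphMemF, Term.eval_update_of_avoids, ht, hu]

lemma sat_witnessMemF (ht : t.Avoids 5) :
    Sat stdFull v A (witnessMemF t) ↔ Nat.pair 0 (t.eval v) ∈ A 1 := by
  simp [witnessMemF, Term.eval_update_of_avoids, ht]

lemma sat_bindChild (hp : p = 1 ∨ p = 3) (hu5 : u.Avoids 5) (hup : u.Avoids (otherTraceVar p)) :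
    Sat stdFull v A (bindChild u p body) ↔
      Sat stdFull (Function.update v (otherTraceVar p) (traceChild (v p) (u.eval v))) A body := by
  have : p ≠ otherTraceVar p ∧ 5 ≠ otherTraceVar p ∧ p ≠ 5 := by
    rcases hp with rfl | rfl <;> simp [otherTraceVar]
  simp [bindChild, Term.eval_update_of_avoids, hu5, hup, this, traceChild, eq_comm]

lemma sat_skolemBind {x : ℕ} {h : ℕ → ℕ} (hp : p = 1 ∨ p = 3) (hx : x % 2 = 0)
    (hgraph : ∀ k y, Nat.pair 1 (Nat.pair k y) ∈ A 1 ↔ h k = y) :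
    Sat stdFull v A (skolemBind x p body) ↔
      Sat stdFull (Function.update v x (h (v p))) A (bindChild (.var x) p body) := by
  have hpx : p ≠ x := by omega
  have hp5 : p ≠ 5 := by omega
  have hx5 : x ≠ 5 := by omega
  simp [skolemBind, sat_graphMemF (t := .var p) (u := .var x) hp5 hx5, hgraph,
    Function.update_of_ne hpx]

structure CodesSkolem (Xv : ℕ) (A₁ A : ℕ → Set ℕ) (h : ℕ → ℕ) : Prop where
  eq_of_ne : ∀ i, i ≠ 1 → i ≠ Xv → A₁ i = A i
  graph : ∀ k y, Nat.pair 1 (Nat.pair k y) ∈ A₁ 1 ↔ h k = y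
  witness : ∀ m, Nat.pair 0 m ∈ A₁ 1 ↔ m ∈ A Xv

/-- A formula expressing `SkSat h φ b (v p) v A`, where `p ∈ {1, 3}` holds the current trace,
`h` and `A Xv` are coded in set variable 1 as in `CodesSkolem`, and all variables of `φ` are even,
leaving the odd ones free for traces (1, 3) and auxiliary values (5, 7). -/
def skolemize (Xv : ℕ) : Fml → Bool → ℕ → Fml
  | .eq t u, b, _ => cond b (.eq t u) (.not (.eq t u))
  | .lt t u, b, _ => cond b (.lt t u) (.not (.lt t u))
  | .mem t i, b, _ =>
      if i = Xv then cond b (witnessMemF t) (.not (witnessMemF t))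
      else cond b (.mem t i) (.not (.mem t i))
  | .not φ, b, p => skolemize Xv φ (!b) p
  | .and φ ψ, b, p =>
      cond b (.and (bindChild (numeral 0) p (skolemize Xv φ true (otherTraceVar p)))
                   (bindChild (numeral 1) p (skolemize Xv ψ true (otherTraceVar p))))
             (Fml.or (bindChild (numeral 0) p (skolemize Xv φ false (otherTraceVar p)))
                     (bindChild (numeral 1) p (skolemize Xv ψ false (otherTraceVar p))))
  | .nall x φ, b, p =>
      cond b (.nall x (bindChild (.var x) p (skolemize Xv φ true (otherTraceVar p))))
             (skolemBind x p (skolemize Xv φ false (otherTraceVar p)))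
  | .nex x φ, b, p =>
      cond b (skolemBind x p (skolemize Xv φ true (otherTraceVar p)))
             (.nall x (bindChild (.var x) p (skolemize Xv φ false (otherTraceVar p))))
  | .ballLt x t φ, b, p =>
      cond b (.ballLt x t (bindChild (.var x) p (skolemize Xv φ true (otherTraceVar p))))
             (.bexLt x t (bindChild (.var x) p (skolemize Xv φ false (otherTraceVar p))))
  | .bexLt x t φ, b, p =>
      cond b (.bexLt x t (bindChild (.var x) p (skolemize Xv φ true (otherTraceVar p))))
             (.ballLt x t (bindChild (.var x) p (skolemize Xv φ false (otherTraceVar p))))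
  | .sall _ _, _, _ => .eq .zero .zero
  | .sex _ _, _, _ => .eq .zero .zero

lemma arithmetical_skolemize (Xv : ℕ) (φ : Fml) (b : Bool) (p : ℕ) :
    (skolemize Xv φ b p).arithmetical := by
  have hbind : ∀ {u q body}, body.arithmetical → (bindChild u q body).arithmetical :=
    fun hb => ⟨⟨Fml.arithmetical_isPair, trivial⟩, hb⟩
  have hskol : ∀ {x q body}, body.arithmetical → (skolemBind x q body).arithmetical :=
    fun hb => ⟨⟨Fml.arithmetical_isPair, Fml.arithmetical_isPair, trivial⟩, hbind hb⟩
  induction φ generalizing b p with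
  | eq | lt | sall | sex => cases b <;> trivial
  | mem t i => unfold skolemize; split_ifs <;> cases b <;> trivial
  | not φ ih => exact ih _ _
  | and φ ψ ih₁ ih₂ => cases b <;> exact ⟨hbind (ih₁ _ _), hbind (ih₂ _ _)⟩
  | nall x φ ih | nex x φ ih | ballLt x t φ ih | bexLt x t φ ih =>
      cases b <;> first | exact hbind (ih _ _) | exact hskol (ih _ _)

variable {φ : Fml} {Xv : ℕ} {A₁ : ℕ → Set ℕ} {h : ℕ → ℕ} {v₁ v₂ : ℕ → ℕ}

lemma otherTraceVar_cases (hp : p = 1 ∨ p = 3) : otherTraceVar p = 1 ∨ otherTraceVar p = 3 := by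
  rcases hp with rfl | rfl <;> simp [otherTraceVar]

lemma sat_bindChild_skolemize {χ : Fml} {c : Bool} (hp : p = 1 ∨ p = 3)
    (ih : ∀ v₁ v₂ : ℕ → ℕ, (∀ x, x % 2 = 0 → v₁ x = v₂ x) →
      (Sat stdFull v₁ A₁ (skolemize Xv χ c (otherTraceVar p)) ↔
        SkSat h χ c (v₁ (otherTraceVar p)) v₂ A))
    (hu5 : u.Avoids 5) (hup : u.Avoids (otherTraceVar p)) (hv : ∀ x, x % 2 = 0 → v₁ x = v₂ x) :
    Sat stdFull v₁ A₁ (bindChild u p (skolemize Xv χ c (otherTraceVar p))) ↔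
      SkSat h χ c (traceChild (v₁ p) (u.eval v₁)) v₂ A := by
  have hodd : otherTraceVar p % 2 = 1 := by rcases otherTraceVar_cases hp with h | h <;> rw [h]
  rw [sat_bindChild hp hu5 hup, ih _ _ fun x hx => ?_, Function.update_self]
  rw [Function.update_of_ne (by omega), hv x hx]

lemma sat_bindChild_var_skolemize {x : ℕ} {χ : Fml} {c : Bool} (hp : p = 1 ∨ p = 3)
    (hx : x % 2 = 0)
    (ih : ∀ v₁ v₂ : ℕ → ℕ, (∀ x, x % 2 = 0 → v₁ x = v₂ x) →
      (Sat stdFull v₁ A₁ (skolemize Xv χ c (otherTraceVar p)) ↔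
        SkSat h χ c (v₁ (otherTraceVar p)) v₂ A))
    (hv : ∀ x, x % 2 = 0 → v₁ x = v₂ x) (a : ℕ) :
    Sat stdFull (Function.update v₁ x a) A₁
        (bindChild (.var x) p (skolemize Xv χ c (otherTraceVar p))) ↔
      SkSat h χ c (traceChild (v₁ p) a) (Function.update v₂ x a) A := by
  have hpx : p ≠ x := by omega
  have hv' : ∀ y, y % 2 = 0 → Function.update v₁ x a y = Function.update v₂ x a y := by
    intro y hy
    by_cases hyx : y = x
    · simp [hyx]
    · simp [Function.update_of_ne hyx, hv y hy]
  simpa [Function.update_of_ne hpx] using sat_bindChild_skolemize (u := .var x) hp ih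
    (show x ≠ 5 by omega)
    (show x ≠ otherTraceVar p by rcases otherTraceVar_cases hp with h | h <;> omega) hv'

lemma sat_skolemize (hφ : φ.EvenVars) (hc : CodesSkolem Xv A₁ A h) (b : Bool)
    (hp : p = 1 ∨ p = 3) (hv : ∀ x, x % 2 = 0 → v₁ x = v₂ x) :
    Sat stdFull v₁ A₁ (skolemize Xv φ b p) ↔ SkSat h φ b (v₁ p) v₂ A := by
  induction φ generalizing b p v₁ v₂ with
  | eq t u | lt t u =>
      cases b <;> simp [skolemize, SkSat, hφ.1.eval_congr hv, hφ.2.eval_congr hv]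
  | mem t i =>
      have ht := hφ.1.eval_congr hv
      by_cases hi : i = Xv
      · subst hi
        cases b <;>
          simp [skolemize, SkSat, sat_witnessMemF (hφ.1.avoids (y := 5) rfl), hc.witness, ht]
      · have hA := hc.eq_of_ne i (by have := hφ.2; omega) hi
        cases b <;> simp [skolemize, SkSat, hi, hA, ht]
  | not φ ih => exact ih hφ _ hp hv
  | and φ ψ ih₁ ih₂ =>
      have step₁ := fun c => sat_bindChild_skolemize (c := c) (u := numeral 0) hp
        (fun _ _ hw => ih₁ hφ.1 c (otherTraceVar_cases hp) hw) (Term.avoids_numeral _ _)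
        (Term.avoids_numeral _ _) hv
      have step₂ := fun c => sat_bindChild_skolemize (c := c) (u := numeral 1) hp
        (fun _ _ hw => ih₂ hφ.2 c (otherTraceVar_cases hp) hw) (Term.avoids_numeral _ _)
        (Term.avoids_numeral _ _) hv
      cases b
      · simp only [skolemize, cond, sat_or, step₁, step₂, Term.eval_numeral]; rfl
      · simp only [skolemize, cond, sat_and, step₁, step₂, Term.eval_numeral]; rfl
  | nall x φ ih =>
      have step := fun c => sat_bindChild_var_skolemize (c := c) hp hφ.1
        (fun _ _ hw => ih hφ.2 c (otherTraceVar_cases hp) hw) hv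
      cases b
      · rw [skolemize, cond, sat_skolemBind hp hφ.1 hc.graph]; exact step false _
      · exact forall_congr' (step true)
  | nex x φ ih =>
      have step := fun c => sat_bindChild_var_skolemize (c := c) hp hφ.1
        (fun _ _ hw => ih hφ.2 c (otherTraceVar_cases hp) hw) hv
      cases b
      · exact forall_congr' (step false)
      · rw [skolemize, cond, sat_skolemBind hp hφ.1 hc.graph]; exact step true _
  | ballLt x t φ ih =>
      have step := fun c => sat_bindChild_var_skolemize (c := c) hp hφ.1
        (fun _ _ hw => ih hφ.2.2 c (otherTraceVar_cases hp) hw) hv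
      cases b
      · simp only [skolemize, cond, sat_bexLt, hφ.2.1.eval_congr hv, step]; rfl
      · simp only [skolemize, cond, sat_ballLt, hφ.2.1.eval_congr hv, step]; rfl
  | bexLt x t φ ih =>
      have step := fun c => sat_bindChild_var_skolemize (c := c) hp hφ.1
        (fun _ _ hw => ih hφ.2.2 c (otherTraceVar_cases hp) hw) hv
      cases b
      · simp only [skolemize, cond, sat_ballLt, hφ.2.1.eval_congr hv, step]; rfl
      · simp only [skolemize, cond, sat_bexLt, hφ.2.1.eval_congr hv, step]; rfl
  | sall | sex => exact hφ.elim

end Skolemize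

/-! ### Stems -/

section Stem

def FollowsStem (s : List (ℕ × Bool)) (W : Set ℕ) (h : ℕ → ℕ) : Prop :=
  ∀ j (hj : j < s.length), h j = s[j].1 ∧ (j ∈ W ↔ s[j].2 = true)

def stemF (i : ℕ) : List (ℕ × Bool) → Fml
  | [] => .eq .zero .zero
  | a :: s =>
      ((Fml.mem (numeral (Nat.pair 1 (Nat.pair i a.1))) 1).and
        (cond a.2 id Fml.not (.mem (numeral (Nat.pair 0 i)) 1))).and (stemF (i + 1) s)

lemma arithmetical_stemF (i : ℕ) (s : List (ℕ × Bool)) : (stemF i s).arithmetical := by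
  induction s generalizing i with
  | nil => trivial
  | cons a s ih => exact ⟨⟨trivial, by cases a.2 <;> trivial⟩, ih _⟩

lemma sat_stemF {v : ℕ → ℕ} {A : ℕ → Set ℕ} (i : ℕ) (s : List (ℕ × Bool)) :
    Sat stdFull v A (stemF i s) ↔ ∀ j (hj : j < s.length),
      Nat.pair 1 (Nat.pair (i + j) s[j].1) ∈ A 1 ∧ (Nat.pair 0 (i + j) ∈ A 1 ↔ s[j].2 = true) := by
  induction s generalizing i with
  | nil => simp [stemF]
  | cons a s ih =>
      have hbit : Sat stdFull v A (cond a.2 id Fml.not (.mem (numeral (Nat.pair 0 i)) 1)) ↔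
          (Nat.pair 0 i ∈ A 1 ↔ a.2 = true) := by
        cases a.2 <;> simp
      simp only [stemF, sat_and, sat_mem, Term.eval_numeral, hbit, ih, List.length_cons]
      constructor
      · rintro ⟨h₀, hs⟩ (_ | j) hj
        · simpa using h₀
        · simpa [Nat.add_assoc, Nat.add_comm 1] using hs j (by omega)
      · intro h
        refine ⟨by simpa using h 0 (by omega), fun j hj => ?_⟩
        have := h (j + 1) (by omega)
        rwa [List.getElem_cons_succ, show i + (j + 1) = i + 1 + j by omega] at this

def graphFunctionalF : Fml :=
  .nall 0 ((Fml.nex 2 (graphMemF (.var 0) (.var 2))).and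
    (.nall 2 (.nall 4 (((graphMemF (.var 0) (.var 2)).and (graphMemF (.var 0) (.var 4))).imp
      (.eq (.var 2) (.var 4))))))

lemma arithmetical_graphFunctionalF : graphFunctionalF.arithmetical := by
  have : ∀ {t u}, (graphMemF t u).arithmetical :=
    ⟨Fml.arithmetical_isPair, Fml.arithmetical_isPair, trivial⟩
  exact ⟨this, ⟨this, this⟩, trivial⟩

lemma sat_graphFunctionalF {v : ℕ → ℕ} {A : ℕ → Set ℕ} :
    Sat stdFull v A graphFunctionalF ↔ ∀ k, ∃! y, Nat.pair 1 (Nat.pair k y) ∈ A 1 := by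
  have hg : ∀ (w : ℕ → ℕ) (x y : ℕ), x ≠ 5 → y ≠ 5 →
      (Sat stdFull w A (graphMemF (.var x) (.var y)) ↔ Nat.pair 1 (Nat.pair (w x) (w y)) ∈ A 1) :=
    fun _ _ _ hx hy => sat_graphMemF hx hy
  simp only [graphFunctionalF, sat_nall, sat_and, sat_nex, sat_imp, sat_eq, Term.eval_var,
    hg _ _ _ (by decide : (0 : ℕ) ≠ 5) (by decide : (2 : ℕ) ≠ 5),
    hg _ _ _ (by decide : (0 : ℕ) ≠ 5) (by decide : (4 : ℕ) ≠ 5)]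
  simp only [Function.update_apply, OfNat.ofNat_ne_zero, OfNat.zero_ne_ofNat, reduceIte, Nat.reduceEqDiff, and_imp]
  exact forall_congr' fun k =>
    ⟨fun ⟨⟨y, hy⟩, hu⟩ => ⟨y, hy, fun y' hy' => hu _ _ hy' hy⟩,
     fun ⟨y, hy, hu⟩ => ⟨⟨y, hy⟩, fun a b ha hb => (hu a ha).trans (hu b hb).symm⟩⟩

def skolemCode (h : ℕ → ℕ) (W : Set ℕ) : Set ℕ :=
  {c | (∃ k, c = Nat.pair 1 (Nat.pair k (h k))) ∨ ∃ m ∈ W, c = Nat.pair 0 m}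

variable {Xv : ℕ} {ψ : Fml} {s : List (ℕ × Bool)} {Z : Set ℕ}

def stemFormula (Xv : ℕ) (ψ : Fml) (s : List (ℕ × Bool)) : Fml :=
  .sex 1 ((stemF 0 s).and (graphFunctionalF.and (skolemize Xv ψ true 3)))

lemma sigma11_stemFormula : (stemFormula Xv ψ s).sigma11 :=
  .inr ⟨1, (stemF 0 s).and (graphFunctionalF.and (skolemize Xv ψ true 3)),
    ⟨arithmetical_stemF 0 s, arithmetical_graphFunctionalF, arithmetical_skolemize Xv ψ true 3⟩, rfl⟩

lemma holds1_stemFormula (hψ : ψ.EvenVars) :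
    holds1 (stemFormula Xv ψ s) Z ↔ ∃ W h, FollowsStem s W h ∧
      SkSat h ψ true 0 (fun _ => 0) (Function.update (fun _ => Z) Xv W) := by
  have key : ∀ U W h, (∀ k y, Nat.pair 1 (Nat.pair k y) ∈ U ↔ h k = y) →
      (∀ m, Nat.pair 0 m ∈ U ↔ m ∈ W) →
      (Sat stdFull (fun _ => 0) (Function.update (fun _ => Z) 1 U)
        ((stemF 0 s).and (graphFunctionalF.and (skolemize Xv ψ true 3))) ↔
        FollowsStem s W h ∧ SkSat h ψ true 0 (fun _ => 0) (Function.update (fun _ => Z) Xv W)) := by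
    intro U W h hg hw
    have hc : CodesSkolem Xv (Function.update (fun _ => Z) 1 U)
        (Function.update (fun _ => Z) Xv W) h :=
      ⟨fun i h1 hX => by simp [h1, hX], by simpa using hg, by simpa using hw⟩
    simp only [sat_and, sat_stemF, sat_graphFunctionalF,
      sat_skolemize hψ hc true (.inr rfl) (fun _ _ => rfl), Function.update_self, hg, hw,
      zero_add, existsUnique_eq', forall_const, true_and, FollowsStem]
  change (∃ U ∈ Set.univ, _) ↔ _
  constructor
  · rintro ⟨U, -, hU⟩
    have hfun := (sat_graphFunctionalF.mp (sat_and.mp (sat_and.mp hU).2).1)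
    choose h hh using fun k => (hfun k).exists
    have hg : ∀ k y, Nat.pair 1 (Nat.pair k y) ∈ U ↔ h k = y :=
      fun k y => ⟨fun hy => (hfun k).unique (hh k) hy, fun hy => hy ▸ hh k⟩
    exact ⟨_, h, (key U {m | Nat.pair 0 m ∈ U} h hg fun _ => Iff.rfl).mp hU⟩
  · rintro ⟨W, h, hst⟩
    exact ⟨skolemCode h W, trivial, (key _ W h (fun _ _ => by simp [skolemCode, eq_comm])
      (fun _ => by simp [skolemCode])).mpr hst⟩

end Stem

/-! ### Stem refinements of Σ¹₁ classes -/

section StemClass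

structure Sigma11NF (𝒞 : Set (Set ℕ)) where
  ψ : Fml
  Xv : ℕ
  arithmetical : ψ.arithmetical
  evenVars : ψ.EvenVars
  mem_iff : ∀ Z, Z ∈ 𝒞 ↔ ∃ W, Sat stdFull (fun _ => 0) (Function.update (fun _ => Z) Xv W) ψ

lemma Sigma11Class.nonempty_sigma11NF {𝒞 : Set (Set ℕ)} (h𝒞 : Sigma11Class 𝒞) :
    Nonempty (Sigma11NF 𝒞) := by
  obtain ⟨φ, hφ | ⟨X, ψ, hψ, rfl⟩, h𝒞⟩ := h𝒞
  · have hconst : ∀ Z W : Set ℕ, (fun i => Function.update (fun _ => Z) 3 W (2 * i)) = fun _ => Z :=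
      fun _ _ => funext fun i => Function.update_of_ne (by omega) _ _
    refine ⟨⟨φ.doubleVars, 3, hφ.doubleVars, hφ.evenVars_doubleVars, fun Z => ?_⟩⟩
    simp only [hφ.sat_doubleVars, hconst, exists_const]
    exact h𝒞 Z
  · refine ⟨⟨ψ.doubleVars, 2 * X, hψ.doubleVars, hψ.evenVars_doubleVars, fun Z => ?_⟩⟩
    simp only [hψ.sat_doubleVars, update_comp_two_mul]
    exact (h𝒞 Z).trans ⟨fun ⟨W, _, h⟩ => ⟨W, h⟩, fun ⟨W, h⟩ => ⟨W, trivial, h⟩⟩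

namespace Sigma11NF

variable {𝒞 : Set (Set ℕ)} (N : Sigma11NF 𝒞) {s t : List (ℕ × Bool)} {Z : Set ℕ}

def stem (s : List (ℕ × Bool)) : Set (Set ℕ) :=
  {Z | ∃ W h, FollowsStem s W h ∧
    SkSat h N.ψ true 0 (fun _ => 0) (Function.update (fun _ => Z) N.Xv W)}

lemma sigma11Class_stem (s : List (ℕ × Bool)) : Sigma11Class (N.stem s) :=
  ⟨stemFormula N.Xv N.ψ s, sigma11_stemFormula, fun _ => (holds1_stemFormula N.evenVars).symm⟩

lemma stem_nil : N.stem [] = 𝒞 := by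
  ext Z
  simp [stem, FollowsStem, N.mem_iff, sat_iff_exists_skSat N.arithmetical (tr := 0)]

lemma stem_anti (hst : s <+: t) : N.stem t ⊆ N.stem s :=
  fun _ ⟨W, h, hfol, hq⟩ => ⟨W, h, fun j hj => by
    simpa [hst.getElem hj] using hfol j (hj.trans_le hst.length_le), hq⟩

lemma exists_mem_stem_append (hZ : Z ∈ N.stem s) : ∃ a, Z ∈ N.stem (s ++ [a]) := by
  classical
  obtain ⟨W, h, hfol, hq⟩ := hZ
  refine ⟨(h s.length, decide (s.length ∈ W)), W, h, fun j hj => ?_, hq⟩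
  rcases (Nat.lt_or_eq_of_le (Nat.le_of_lt_succ (by simpa using hj))) with hj | rfl
  · simpa [List.getElem_append_left hj] using hfol j hj
  · simp

lemma mem_of_forall_exists_mem_stem (s : ℕ → List (ℕ × Bool)) (hs : ∀ m n, m ≤ n → s m <+: s n)
    (hlen : ∀ n, n ≤ (s n).length) (happ : ∀ n, ∃ Z' ∈ N.stem (s n), ∀ j < n, (j ∈ Z' ↔ j ∈ Z)) :
    Z ∈ 𝒞 := by
  let σ : ℕ → ℕ × Bool := fun j => (s (j + 1))[j]'(hlen (j + 1))
  let W : Set ℕ := {k | (σ k).2 = true}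
  have hq : SkSat (fun k => (σ k).1) N.ψ true 0 (fun _ => 0)
      (Function.update (fun _ => Z) N.Xv W) := by
    refine SkSat.of_forall_approx N.arithmetical fun n => ?_
    obtain ⟨Z', ⟨W', h', hfol, hq⟩, hZ'⟩ := happ n
    have hσ : ∀ j < n, h' j = (σ j).1 ∧ (j ∈ W' ↔ (σ j).2 = true) := fun j hj => by
      simpa [σ, (hs (j + 1) n hj).getElem] using hfol j (hj.trans_le (hlen n))
    refine ⟨_, h', ⟨fun i _ j hj => ?_, fun k hk => (hσ k hk).1⟩, hq⟩
    by_cases hi : i = N.Xv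
    · subst hi
      simpa [W] using (hσ j hj).2
    · simpa [Function.update_of_ne hi] using hZ' j hj
  exact (N.mem_iff Z).mpr ⟨W, (hq.sound N.arithmetical).mpr rfl⟩

end Sigma11NF

end StemClass

/-! ### Fusion -/

section Fusion

lemma sigma11Class_bit (j : ℕ) (b : Bool) : Sigma11Class {X | Nat.pair 0 j ∈ X ↔ b = true} := by
  refine ⟨cond b id Fml.not (.mem (numeral (Nat.pair 0 j)) 0), .inl (by cases b <;> trivial),
    fun X => ?_⟩
  change _ ↔ Sat stdFull _ _ _
  cases b <;> simp

lemma mem_listJoin_map {l : List ℕ} {Xs : ℕ → Set ℕ} {i j : ℕ} :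
    Nat.pair i j ∈ listJoin (l.map Xs) ↔ ∃ hi : i < l.length, j ∈ Xs l[i] := by
  simp only [listJoin, Set.mem_ofPred_eq, Nat.unpair_pair, List.length_map]
  exact ⟨fun ⟨hi, h⟩ => ⟨hi, by simpa [hi] using h⟩, fun ⟨hi, h⟩ => ⟨hi, by simpa [hi] using h⟩⟩

@[simp] lemma pair_zero_mem_listJoin_singleton {X : Set ℕ} {j : ℕ} :
    Nat.pair 0 j ∈ listJoin [X] ↔ j ∈ X := by
  simp [listJoin]

lemma Meets.mono {S : ℕ → Set (Set ℕ)} {Xs : ℕ → Set ℕ} {p q : Cond} (hq : Meets S Xs q)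
    (hpq : p ⊆ q) : Meets S Xs p :=
  fun r hr => hq r (hpq hr)

variable {S : ℕ → Set (Set ℕ)} (hS : IsS11Enum S)

noncomputable def IsS11Enum.nf (e : ℕ) : Sigma11NF (S e) := (hS.1 e).nonempty_sigma11NF.some

noncomputable def IsS11Enum.stemIdx (e : ℕ) (s : List (ℕ × Bool)) : ℕ :=
  (hS.2 _ ((hS.nf e).sigma11Class_stem s)).choose

lemma IsS11Enum.apply_stemIdx (e : ℕ) (s : List (ℕ × Bool)) :
    S (hS.stemIdx e s) = (hS.nf e).stem s :=
  (hS.2 _ ((hS.nf e).sigma11Class_stem s)).choose_spec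

noncomputable def IsS11Enum.bitIdx (j : ℕ) (b : Bool) : ℕ := (hS.2 _ (sigma11Class_bit j b)).choose

lemma IsS11Enum.apply_bitIdx (j : ℕ) (b : Bool) :
    S (hS.bitIdx j b) = {X | Nat.pair 0 j ∈ X ↔ b = true} :=
  (hS.2 _ (sigma11Class_bit j b)).choose_spec

variable {hS}

lemma Meets.mem_iff_of_bitIdx_mem {Xs : ℕ → Set ℕ} {q : Cond} {i j : ℕ} {b : Bool}
    (hm : Meets S Xs q) (hb : (hS.bitIdx j b, [i]) ∈ q) : j ∈ Xs i ↔ b = true := by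
  simpa [hS.apply_bitIdx] using hm _ hb

variable (hS)

/-- Stated for every sequence meeting `p`, so that it persists when `p` is extended. -/
def StemsOK (p : Cond) (st : ℕ × List ℕ → List (ℕ × Bool)) : Prop :=
  ∀ Xs, Meets S Xs p → ∀ r ∈ p, listJoin (r.2.map Xs) ∈ (hS.nf r.1).stem (st r)

variable {hS}

lemma StemsOK.of_subset {p q : Cond} {st : ℕ × List ℕ → List (ℕ × Bool)} (hst : StemsOK hS p st)
    (hpq : p ⊆ q) : StemsOK hS q fun r => if r ∈ p then st r else [] := by
  intro Xs hXs r hr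
  dsimp only
  split_ifs with hrp
  · exact hst Xs (hXs.mono hpq) r hrp
  · rw [Sigma11NF.stem_nil]; exact hXs r hr

lemma exists_refine {p : Cond} {st : ℕ × List ℕ → List (ℕ × Bool)} (hp : p ∈ Conds S)
    (hst : StemsOK hS p st) (n : ℕ) :
    ∃ p' st', p ⊆ p' ∧ p' ∈ Conds S ∧ StemsOK hS p' st' ∧
      (∀ r ∈ p, ∃ a, st' r = st r ++ [a]) ∧ ∀ i < n, ∀ j < n, ∃ b, (hS.bitIdx j b, [i]) ∈ p' := by
  classical
  -- the new stems and bits are all read off one sequence `Xs` meeting `p`, so `Xs` meets them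
  obtain ⟨Xs, hXs⟩ := hp
  have : ∀ r, ∃ a, r ∈ p → listJoin (r.2.map Xs) ∈ (hS.nf r.1).stem (st r ++ [a]) := fun r =>
    if hr : r ∈ p then ((hS.nf r.1).exists_mem_stem_append (hst Xs hXs r hr)).imp fun _ h _ => h
    else ⟨(0, false), fun h => absurd h hr⟩
  choose a ha using this
  let stems : Cond := p.image fun r => (hS.stemIdx r.1 (st r ++ [a r]), r.2)
  let bits : Cond := (Finset.range n ×ˢ Finset.range n).image fun ij =>
    (hS.bitIdx ij.2 (decide (ij.2 ∈ Xs ij.1)), [ij.1])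
  refine ⟨p ∪ stems ∪ bits, fun r => if r ∈ p then st r ++ [a r] else [],
    Finset.subset_union_left.trans Finset.subset_union_left, ⟨Xs, ?_⟩, ?_,
    fun r hr => ⟨a r, if_pos hr⟩,
    fun i hi j hj =>
      ⟨_, Finset.mem_union_right _ (Finset.mem_image.2 ⟨(i, j), by simp [hi, hj], rfl⟩)⟩⟩
  · intro q hq
    simp only [Finset.mem_union, Finset.mem_image, stems, bits] at hq
    rcases hq with (hq | ⟨r, hr, rfl⟩) | ⟨⟨i, j⟩, -, rfl⟩
    · exact hXs q hq
    · simpa [hS.apply_stemIdx] using ha r hr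
    · simp [hS.apply_bitIdx]
  · intro Xs' hXs' r hr
    dsimp only
    split_ifs with hrp
    · simpa [hS.apply_stemIdx] using
        hXs' _ (Finset.mem_union_left _ (Finset.mem_union_right _ (Finset.mem_image_of_mem _ hrp)))
    · rw [Sigma11NF.stem_nil]; exact hXs' r hr

variable (hS)

structure IsFusionSeq (p : ℕ → Cond) (st : ℕ → ℕ × List ℕ → List (ℕ × Bool)) : Prop where
  mono : Monotone p
  mem_conds : ∀ n, p n ∈ Conds S
  stemsOK : ∀ n, StemsOK hS (p n) (st n)
  stem_succ : ∀ n, ∀ r ∈ p n, ∃ a, st (n + 1) r = st n r ++ [a]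
  bit : ∀ n, ∀ i < n, ∀ j < n, ∃ b, (hS.bitIdx j b, [i]) ∈ p (n + 1)

lemma exists_isFusionSeq {p₀ : Cond} (hp₀ : p₀ ∈ Conds S) (D : ℕ → Set Cond)
    (hD : ∀ n, DenseIn (Conds S) (D n)) :
    ∃ p st, IsFusionSeq hS p st ∧ p 0 = p₀ ∧ ∀ n, ∃ q ∈ D n, q ⊆ p (n + 1) := by
  obtain ⟨f, hf₀, hf⟩ := exists_seq_of_forall_exists
    (P := fun σ : Cond × (ℕ × List ℕ → List (ℕ × Bool)) => σ.1 ∈ Conds S ∧ StemsOK hS σ.1 σ.2)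
    (R := fun n σ σ' => σ.1 ⊆ σ'.1 ∧ (∀ r ∈ σ.1, ∃ a, σ'.2 r = σ.2 r ++ [a]) ∧
      (∀ i < n, ∀ j < n, ∃ b, (hS.bitIdx j b, [i]) ∈ σ'.1) ∧ ∃ q ∈ D n, q ⊆ σ'.1)
    (a₀ := (p₀, fun _ => [])) ⟨hp₀, fun Xs hXs r hr => by rw [Sigma11NF.stem_nil]; exact hXs r hr⟩
    fun n σ ⟨hσ, hst⟩ => by
      obtain ⟨q, hqD, hσq⟩ := (hD n).2 σ.1 hσ
      obtain ⟨p', st', hqp', hp', hst', hstem, hbit⟩ :=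
        exists_refine ((hD n).1 hqD) (hst.of_subset hσq) n
      exact ⟨(p', st'), ⟨hp', hst'⟩, hσq.trans hqp',
        fun r hr => by simpa [hr] using hstem r (hσq hr), hbit, q, hqD, hqp'⟩
  exact ⟨fun n => (f n).1, fun n => (f n).2,
    ⟨monotone_nat_of_le_succ fun n => (hf n).2.1, fun n => (hf n).1.1, fun n => (hf n).1.2,
      fun n => (hf n).2.2.1, fun n => (hf n).2.2.2.1⟩,
    by simp [hf₀], fun n => (hf n).2.2.2.2⟩

def fusionLimit (p : ℕ → Cond) (i : ℕ) : Set ℕ := {j | ∃ k, (hS.bitIdx j true, [i]) ∈ p k}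

namespace IsFusionSeq

variable {hS} {p : ℕ → Cond} {st : ℕ → ℕ × List ℕ → List (ℕ × Bool)} (hF : IsFusionSeq hS p st)
include hF

lemma mem_fusionLimit_iff {i j m : ℕ} {b : Bool} (hb : (hS.bitIdx j b, [i]) ∈ p m) :
    j ∈ fusionLimit hS p i ↔ b = true := by
  refine ⟨fun ⟨k, hk⟩ => ?_, fun h => ⟨m, h ▸ hb⟩⟩
  obtain ⟨Xs, hXs⟩ := hF.mem_conds (max k m)
  exact ((hXs.mem_iff_of_bitIdx_mem (hF.mono (le_max_right k m) hb)).symm.trans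
    (hXs.mem_iff_of_bitIdx_mem (hF.mono (le_max_left k m) hk))).mpr rfl

lemma mem_iff_mem_fusionLimit {Xs : ℕ → Set ℕ} {n i j : ℕ} (hi : i < n) (hj : j < n)
    (hXs : Meets S Xs (p (n + 1))) : j ∈ Xs i ↔ j ∈ fusionLimit hS p i := by
  obtain ⟨b, hb⟩ := hF.bit n i hi j hj
  rw [hXs.mem_iff_of_bitIdx_mem hb, hF.mem_fusionLimit_iff hb]

lemma stem_prefix {r : ℕ × List ℕ} {k : ℕ} (hr : r ∈ p k) {m n : ℕ} (hkm : k ≤ m) (hmn : m ≤ n) :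
    st m r <+: st n r ∧ (st m r).length + (n - m) ≤ (st n r).length := by
  induction n, hmn using Nat.le_induction with
  | base => simp
  | succ n hmn ih =>
      obtain ⟨a, ha⟩ := hF.stem_succ n r (hF.mono (hkm.trans hmn) hr)
      rw [ha]
      exact ⟨ih.1.trans (List.prefix_append _ _), by simp; omega⟩

theorem meets_fusionLimit (k : ℕ) : Meets S (fusionLimit hS p) (p k) := by
  intro r hr
  refine (hS.nf r.1).mem_of_forall_exists_mem_stem (fun n => st (k + n) r)
    (fun m n hmn => (hF.stem_prefix hr (by omega) (by omega)).1)
    (fun n => by have := (hF.stem_prefix hr le_rfl (Nat.le_add_right k n)).2; omega) fun n => ?_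
  let N := k + n + r.2.sum
  obtain ⟨Xs, hXs⟩ := hF.mem_conds (N + 1)
  refine ⟨_, (hS.nf r.1).stem_anti (hF.stem_prefix hr (by omega) (by omega : k + n ≤ N + 1)).1
    (hF.stemsOK (N + 1) Xs hXs r (hF.mono (by omega) hr)), fun c hc => ?_⟩
  rw [← Nat.pair_unpair c, mem_listJoin_map, mem_listJoin_map]
  refine exists_congr fun hi => hF.mem_iff_mem_fusionLimit ?_ ?_ hXs
  · have := List.le_sum_of_mem (List.getElem_mem hi); omega
  · have := Nat.unpair_right_le c; omega

end IsFusionSeq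

end Fusion

/-! ### Countably many dense sets -/

section Countable

def Term.code : Term → ℕ
  | .var n => Nat.pair 0 n
  | .zero => Nat.pair 1 0
  | .succ t => Nat.pair 2 t.code
  | .add t u => Nat.pair 3 (Nat.pair t.code u.code)
  | .mul t u => Nat.pair 4 (Nat.pair t.code u.code)

lemma Term.code_injective : Function.Injective Term.code := by
  intro t u h
  induction t generalizing u <;> cases u <;> simp [Term.code, Nat.pair_eq_pair] at h ⊢ <;> grind

def Fml.code : Fml → ℕ
  | .eq t u => Nat.pair 0 (Nat.pair t.code u.code)
  | .lt t u => Nat.pair 1 (Nat.pair t.code u.code)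
  | .mem t i => Nat.pair 2 (Nat.pair t.code i)
  | .not φ => Nat.pair 3 φ.code
  | .and φ ψ => Nat.pair 4 (Nat.pair φ.code ψ.code)
  | .nall x φ => Nat.pair 5 (Nat.pair x φ.code)
  | .nex x φ => Nat.pair 6 (Nat.pair x φ.code)
  | .ballLt x t φ => Nat.pair 7 (Nat.pair x (Nat.pair t.code φ.code))
  | .bexLt x t φ => Nat.pair 8 (Nat.pair x (Nat.pair t.code φ.code))
  | .sall X φ => Nat.pair 9 (Nat.pair X φ.code)
  | .sex X φ => Nat.pair 10 (Nat.pair X φ.code)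

lemma Fml.code_injective : Function.Injective Fml.code := by
  intro φ ψ h
  induction φ generalizing ψ <;> cases ψ <;>
    simp [Fml.code, Nat.pair_eq_pair, Term.code_injective.eq_iff] at h ⊢ <;> grind

instance : Countable Fml := Fml.code_injective.countable

lemma countable_setOf_defOverFrom (𝒮 : Set (Set ℕ)) (Y : Set ℕ) :
    {D : Set Cond | DefOverFrom 𝒮 Y (codeSet D)}.Countable := by
  refine (Set.countable_range fun φ : Fml =>
    {q : Cond | Sat (stdModel 𝒮) (fun _ => Encodable.encode q) (fun _ => Y) φ}).mono ?_
  rintro D ⟨φ, hφ⟩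
  refine ⟨φ, Set.ext fun q => (hφ _).symm.trans ⟨?_, fun hq => ⟨q, hq, rfl⟩⟩⟩
  rintro ⟨q', hq', h⟩
  rwa [← Encodable.encode_injective h]

lemma exists_seq_denseIn (S : ℕ → Set (Set ℕ)) :
    ∃ D : ℕ → Set Cond, (∀ n, DenseIn (Conds S) (D n)) ∧
      ∀ D', DenseIn (Conds S) D' → DefOverFrom (HYPin ∅) ∅ (codeSet D') → ∃ n, D n = D' := by
  let F := insert (Conds S)
    {D : Set Cond | DenseIn (Conds S) D ∧ DefOverFrom (HYPin ∅) ∅ (codeSet D)}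
  have hF : F.Countable :=
    ((countable_setOf_defOverFrom _ _).mono fun _ hD => hD.2).insert _
  -- `Conds S` is added to make the family nonempty.
  obtain ⟨D, hD⟩ := hF.exists_eq_range (Set.insert_nonempty _ _)
  refine ⟨D, fun n => ?_, fun D' hdense hdef => hD.subset (.inr ⟨hdense, hdef⟩)⟩
  rcases hD.superset (Set.mem_range_self n) with h | h
  · exact h ▸ ⟨subset_rfl, fun p hp => ⟨p, hp, subset_rfl⟩⟩
  · exact h.1

end Countable

end SOA

/-- Every condition is met by some generic sequence. -/
theorem SOA.exists_generic_meeting (S : ℕ → Set (Set ℕ)) (hS : SOA.IsS11Enum S)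
    (p : SOA.Cond) (hp : p ∈ SOA.Conds S) :
    ∃ G : ℕ → Set ℕ, SOA.Generic S G ∧ SOA.Meets S G p := by
  obtain ⟨D, hD, hcover⟩ := SOA.exists_seq_denseIn S
  obtain ⟨p, st, hF, rfl, hq⟩ := SOA.exists_isFusionSeq hS hp D hD
  refine ⟨SOA.fusionLimit hS p, fun D' hdense hdef => ?_, hF.meets_fusionLimit 0⟩
  obtain ⟨n, rfl⟩ := hcover D' hdense hdef
  obtain ⟨q, hqD, hqp⟩ := hq n
  exact ⟨q, hqD, (hF.meets_fusionLimit (n + 1)).mono hqp⟩
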